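/- arXiv:2208.07326 — 3 statements merged into one kernel-verified Lean document; each statement's English description precedes it below -/
import Mathlib

section
/- Let ρ∞ > 0, θ∞ > 0, u∞ < 0, r > 0 and 0 < δ < r²/2. Let D₁M∞(η₁, η') := −((η₁ − u∞)/θ∞) M∞(η₁, η') denote the partial derivative of M∞ in the first velocity variable. Then there exists a constant C > 0 such that for every Φ ∈ [0, δ] and every ξ = (ξ₁, ξ') ∈ ℝ³ with ξ₁ ≤ −r, setting ζ₁ := −√(ξ₁² − 2Φ), one has |D₁M∞(ζ₁, ξ') − D₁M∞(ξ₁, ξ')| ≤ C (1 + |ξ₁|²) M∞(ξ) Φ. -/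
open MeasureTheory Real Set Filter

/-- The Maxwellian `M∞` with parameters `ρ∞, θ∞, u∞`, where `ξ = (ξ₁, ξ₂, ξ₃)`. -/
noncomputable def Maxwellian (ρ θ u : ℝ) (ξ : ℝ × ℝ × ℝ) : ℝ :=
  ρ * (2 * π * θ) ^ (-(3:ℝ)/2) *
    Real.exp (-(((ξ.1 - u)^2 + ξ.2.1^2 + ξ.2.2^2) / (2 * θ)))

/-- `D₁M∞(η₁,η') = −((η₁−u)/θ) M∞(η₁,η')`, the partial derivative of `M∞` in the
first velocity variable. -/
noncomputable def MaxwellianD1 (ρ θ u : ℝ) (ξ : ℝ × ℝ × ℝ) : ℝ :=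
  -((ξ.1 - u) / θ) * Maxwellian ρ θ u ξ

/-! The shift `ξ₁ ↦ ζ₁ = -√(ξ₁² - 2Φ)` moves `ξ₁` towards the origin by at most `2Φ / r`,
since `(ζ₁ - ξ₁)(-ζ₁ - ξ₁) = 2Φ` and `-ζ₁ - ξ₁ ≥ r`. Changing the first velocity variable
multiplies the Maxwellian by `exp t` with
`t = ((ξ₁ - u)² - (ζ₁ - u)²) / (2θ) = (Φ + u (ζ₁ - ξ₁)) / θ = O(Φ)`, so
`D₁M∞(ζ₁, ξ') - D₁M∞(ξ) = -(M∞(ξ) / θ) ((ζ₁ - ξ₁) eᵗ + (ξ₁ - u)(eᵗ - 1))`,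
and both terms are `O(Φ)` with a factor at most linear in `|ξ₁|`. -/

lemma Real.abs_exp_sub_one_le_mul_exp_abs (t : ℝ) : |exp t - 1| ≤ |t| * exp |t| := by
  rcases le_or_gt 0 t with ht | ht
  · rw [abs_of_nonneg ht, abs_of_nonneg (by linarith [one_le_exp ht])]
    have h : exp (-t) * exp t = 1 := by rw [← exp_add, neg_add_cancel, exp_zero]
    nlinarith [one_sub_le_exp_neg t, exp_pos t]
  · rw [abs_of_neg ht, abs_of_nonpos (by linarith [exp_lt_one_iff.2 ht])]
    nlinarith [add_one_le_exp t, one_le_exp (neg_nonneg.2 ht.le)]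

lemma abs_neg_sqrt_sq_sub_sub_le {x r Φ : ℝ} (hr : 0 < r) (hx : x ≤ -r) (hΦ : 0 ≤ Φ)
    (hΦx : 2 * Φ ≤ x ^ 2) : |-√(x ^ 2 - 2 * Φ) - x| ≤ 2 * Φ / r := by
  set s := √(x ^ 2 - 2 * Φ)
  have hs : s ^ 2 = x ^ 2 - 2 * Φ := sq_sqrt (by linarith)
  have hsx : s ≤ -x := by nlinarith [sqrt_nonneg (x ^ 2 - 2 * Φ)]
  have hprod : (-s - x) * (s - x) = 2 * Φ := by linear_combination -hs
  rw [abs_of_nonneg (by linarith), le_div_iff₀ hr]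
  nlinarith [sqrt_nonneg (x ^ 2 - 2 * Φ)]

lemma abs_sub_le_one_add_abs_mul_one_add_sq (x u : ℝ) :
    |x - u| ≤ (1 + |u|) * (1 + |x| ^ 2) := by
  nlinarith [abs_sub x u, abs_nonneg x, abs_nonneg u, sq_nonneg (|x| - 1)]

lemma abs_mul_exp_add_mul_exp_sub_one_le (d y t : ℝ) :
    |d * exp t + y * (exp t - 1)| ≤ (|d| + |y| * |t|) * exp |t| := by
  calc |d * exp t + y * (exp t - 1)| ≤ |d| * exp t + |y| * |exp t - 1| := by
        grw [abs_add_le, abs_mul, abs_mul, abs_of_pos (exp_pos t)]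
    _ ≤ |d| * exp |t| + |y| * (|t| * exp |t|) := by
        gcongr
        · exact le_abs_self t
        · exact abs_exp_sub_one_le_mul_exp_abs t
    _ = (|d| + |y| * |t|) * exp |t| := by ring

lemma abs_sq_sub_sq_div_le {a b u θ Φ D : ℝ} (hθ : 0 < θ) (hΦ : 0 ≤ Φ)
    (hab : a ^ 2 = b ^ 2 - 2 * Φ) (hD : |a - b| ≤ D) :
    |((b - u) ^ 2 - (a - u) ^ 2) / (2 * θ)| ≤ (Φ + |u| * D) / θ := by
  have h : ((b - u) ^ 2 - (a - u) ^ 2) / (2 * θ) = (Φ + u * (a - b)) / θ := by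
    field_simp
    linear_combination -hab
  rw [h, abs_div, abs_of_pos hθ]
  gcongr
  calc |Φ + u * (a - b)| ≤ Φ + |u| * |a - b| := by
        grw [abs_add_le, abs_mul, abs_of_nonneg hΦ]
    _ ≤ Φ + |u| * D := by gcongr

lemma maxwellian_nonneg {ρ θ u : ℝ} (hρ : 0 ≤ ρ) (hθ : 0 ≤ θ) (ξ : ℝ × ℝ × ℝ) :
    0 ≤ Maxwellian ρ θ u ξ := by
  unfold Maxwellian
  have : 0 ≤ 2 * π * θ := by positivity
  positivity

section Maxwellian

variable (ρ θ u : ℝ)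

lemma maxwellian_fst_eq_mul_exp (a b ξ₂ ξ₃ : ℝ) :
    Maxwellian ρ θ u (a, ξ₂, ξ₃) =
      Maxwellian ρ θ u (b, ξ₂, ξ₃) * exp (((b - u) ^ 2 - (a - u) ^ 2) / (2 * θ)) := by
  simp only [Maxwellian, mul_assoc, ← exp_add]
  ring_nf

lemma maxwellianD1_fst_sub_maxwellianD1 (a b ξ₂ ξ₃ : ℝ) :
    MaxwellianD1 ρ θ u (a, ξ₂, ξ₃) - MaxwellianD1 ρ θ u (b, ξ₂, ξ₃) =
      -(Maxwellian ρ θ u (b, ξ₂, ξ₃) / θ) *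
        ((a - b) * exp (((b - u) ^ 2 - (a - u) ^ 2) / (2 * θ)) +
          (b - u) * (exp (((b - u) ^ 2 - (a - u) ^ 2) / (2 * θ)) - 1)) := by
  simp only [MaxwellianD1, maxwellian_fst_eq_mul_exp ρ θ u a b]
  ring

end Maxwellian

theorem shifted_maxwellian_derivative_difference_bound_general
    (ρ θ u r δ : ℝ) (hρ : 0 < ρ) (hθ : 0 < θ) (hr : 0 < r)
    (hδr : δ < r^2 / 2) :
    ∃ C > 0, ∀ Φ ∈ Set.Icc (0:ℝ) δ, ∀ ξ₁ ξ₂ ξ₃ : ℝ, ξ₁ ≤ -r →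
      |MaxwellianD1 ρ θ u (-Real.sqrt (ξ₁^2 - 2*Φ), ξ₂, ξ₃) - MaxwellianD1 ρ θ u (ξ₁, ξ₂, ξ₃)|
        ≤ C * (1 + |ξ₁|^2) * Maxwellian ρ θ u (ξ₁, ξ₂, ξ₃) * Φ := by
  set A := 1 + 2 * |u| / r
  set K := exp (δ * A / θ)
  refine ⟨K / θ * (2 / r + A * (1 + |u|) / θ), by positivity, ?_⟩
  rintro Φ ⟨hΦ, hΦδ⟩ ξ₁ ξ₂ ξ₃ hξ
  have hΦξ : 2 * Φ ≤ ξ₁ ^ 2 := by nlinarith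
  set a := -√(ξ₁ ^ 2 - 2 * Φ)
  set t := ((ξ₁ - u) ^ 2 - (a - u) ^ 2) / (2 * θ)
  set M := Maxwellian ρ θ u (ξ₁, ξ₂, ξ₃)
  have hM : 0 ≤ M := maxwellian_nonneg hρ.le hθ.le _
  have hab : |a - ξ₁| ≤ 2 * Φ / r := abs_neg_sqrt_sq_sub_sub_le hr hξ hΦ hΦξ
  have ha : a ^ 2 = ξ₁ ^ 2 - 2 * Φ := by rw [neg_sq, sq_sqrt (by linarith)]
  have ht : |t| ≤ Φ * A / θ := by
    convert abs_sq_sub_sq_div_le (u := u) hθ hΦ ha hab using 1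
    ring
  have hexp : exp |t| ≤ K := exp_le_exp.2 (ht.trans (by gcongr))
  rw [maxwellianD1_fst_sub_maxwellianD1, abs_mul, abs_neg, abs_of_nonneg (by positivity)]
  calc M / θ * |(a - ξ₁) * exp t + (ξ₁ - u) * (exp t - 1)|
      ≤ M / θ * ((2 * Φ / r + (1 + |u|) * (1 + |ξ₁| ^ 2) * (Φ * A / θ)) * K) := by
        grw [abs_mul_exp_add_mul_exp_sub_one_le, hab, ht, hexp,
          abs_sub_le_one_add_abs_mul_one_add_sq ξ₁ u]
    _ ≤ M / θ *
          ((2 * Φ / r * (1 + |ξ₁| ^ 2) + (1 + |u|) * (1 + |ξ₁| ^ 2) * (Φ * A / θ)) * K) := by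
        gcongr
        exact le_mul_of_one_le_right (by positivity) (by nlinarith [sq_nonneg |ξ₁|])
    _ = K / θ * (2 / r + A * (1 + |u|) / θ) * (1 + |ξ₁| ^ 2) * M * Φ := by ring

/-- `|D₁M∞(ζ₁,ξ') − D₁M∞(ξ₁,ξ')| ≤ C (1+|ξ₁|²) M∞(ξ) Φ`
for `ζ₁ = -√(ξ₁² - 2Φ)`. -/
theorem shifted_maxwellian_derivative_difference_bound
    (ρ θ u r δ : ℝ) (hρ : 0 < ρ) (hθ : 0 < θ) (hu : u < 0) (hr : 0 < r)
    (hδ : 0 < δ) (hδr : δ < r^2 / 2) :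
    ∃ C > 0, ∀ Φ ∈ Set.Icc (0:ℝ) δ, ∀ ξ₁ ξ₂ ξ₃ : ℝ, ξ₁ ≤ -r →
      |MaxwellianD1 ρ θ u (-Real.sqrt (ξ₁^2 - 2*Φ), ξ₂, ξ₃) - MaxwellianD1 ρ θ u (ξ₁, ξ₂, ξ₃)|
        ≤ C * (1 + |ξ₁|^2) * Maxwellian ρ θ u (ξ₁, ξ₂, ξ₃) * Φ :=
  shifted_maxwellian_derivative_difference_bound_general ρ θ u r δ hρ hθ hr hδr
end

section
/- Let ρ∞ > 0, θ∞ > 0, r > 0, σ > 0 and u∞ < 0 with |u∞| > r + 2σ. Then there exist constants δ₀ > 0 and C > 0 such that: whenever 0 < Φ_b ≤ δ₀ and Φ^s : [0,∞) → ℝ is continuously differentiable with 0 ≤ Φ^s(x) ≤ Φ_b for all x ≥ 0, the function (x,ξ) ↦ ∂_{ξ₁}(F^s − M∞ψ)(x,ξ)/M∞(ξ)^{1/2} is differentiable in x, and for every x ≥ 0, ( ∫_{ℝ³} |∂_x { ∂_{ξ₁}(F^s − M∞ψ)(x,ξ)/M∞(ξ)^{1/2} }|² dξ )^{1/2} ≤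 C |∂_x Φ^s(x)|, where C and δ₀ are independent of x, Φ^s and Φ_b. -/
open MeasureTheory Real Set Filter Topology

/-- The stationary profile `F^s(x,ξ) = (M∞ψ)(−√(ξ₁²−2Φ^s(x)), ξ')` for `ξ₁ < 0`,
`ξ₁² > 2Φ^s(x)`, and `0` otherwise; `ψ` is a function of `ξ₁` only. -/
noncomputable def statF (ρ θ u : ℝ) (ψ : ℝ → ℝ) (Φs : ℝ → ℝ) (x : ℝ) (ξ : ℝ × ℝ × ℝ) : ℝ :=
  if ξ.1 < 0 ∧ 2 * Φs x < ξ.1^2 then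
    Maxwellian ρ θ u (-Real.sqrt (ξ.1^2 - 2 * Φs x), ξ.2) *
      ψ (-Real.sqrt (ξ.1^2 - 2 * Φs x))
  else 0


noncomputable def mfun (ρ θ u : ℝ) (ζ : ℝ) : ℝ :=
  ρ * (2 * π * θ) ^ (-(3:ℝ)/2) * Real.exp (-((ζ - u)^2 / (2 * θ)))

noncomputable def Efun (θ : ℝ) (p : ℝ × ℝ) : ℝ :=
  Real.exp (-((p.1^2 + p.2^2) / (2 * θ)))


lemma maxwellian_factor (ρ θ u : ℝ) (ξ : ℝ × ℝ × ℝ) :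
    Maxwellian ρ θ u ξ = mfun ρ θ u ξ.1 * Efun θ ξ.2 := by
  unfold Maxwellian mfun Efun
  rw [show -(((ξ.1 - u)^2 + ξ.2.1^2 + ξ.2.2^2) / (2 * θ))
      = -((ξ.1 - u)^2 / (2 * θ)) + -((ξ.2.1^2 + ξ.2.2^2) / (2 * θ)) by ring,
    Real.exp_add]
  ring

lemma mfun_pos {ρ θ : ℝ} (hρ : 0 < ρ) (hθ : 0 < θ) (u ζ : ℝ) : 0 < mfun ρ θ u ζ := by
  unfold mfun; positivity

lemma Efun_pos (θ : ℝ) (p : ℝ × ℝ) : 0 < Efun θ p := Real.exp_pos _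

lemma sqrt_exp_eq (z : ℝ) : Real.sqrt (Real.exp z) = Real.exp (z / 2) := by
  rw [show Real.exp z = Real.exp (z/2) ^ 2 by
    rw [sq, ← Real.exp_add]; norm_num]
  exact Real.sqrt_sq (Real.exp_pos _).le

lemma sqrt_mfun (ρ θ u : ℝ) (hρ : 0 < ρ) (hθ : 0 < θ) (ζ : ℝ) :
    Real.sqrt (mfun ρ θ u ζ)
      = Real.sqrt (ρ * (2 * π * θ) ^ (-(3:ℝ)/2)) * Real.exp (-((ζ - u)^2 / (4 * θ))) := by
  unfold mfun
  rw [Real.sqrt_mul (by positivity), sqrt_exp_eq]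
  congr 1
  ring

lemma hasDerivAt_mfun {ρ θ : ℝ} (u : ℝ) (hθ : θ ≠ 0) (ζ : ℝ) :
    HasDerivAt (mfun ρ θ u) (mfun ρ θ u ζ * (-(ζ - u) / θ)) ζ := by
  have h1 : HasDerivAt (fun ζ : ℝ => -((ζ - u)^2 / (2 * θ))) (-(ζ - u) / θ) ζ := by
    have h0 := (((hasDerivAt_id ζ).sub_const u).pow 2).div_const (2 * θ)
    have := h0.neg
    refine this.congr_deriv ?_
    simp only [id]
    field_simp
    ring
  have h2 := (h1.exp).const_mul (ρ * (2 * π * θ) ^ (-(3:ℝ)/2))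
  refine h2.congr_deriv ?_
  unfold mfun; ring


noncomputable def q0 (ρ θ u : ℝ) (ψ : ℝ → ℝ) (ζ : ℝ) : ℝ := mfun ρ θ u ζ * ψ ζ

noncomputable def qd1 (ρ θ u : ℝ) (ψ : ℝ → ℝ) (ζ : ℝ) : ℝ :=
  mfun ρ θ u ζ * (-(ζ - u) / θ) * ψ ζ + mfun ρ θ u ζ * deriv ψ ζ

noncomputable def qd2 (ρ θ u : ℝ) (ψ : ℝ → ℝ) (ζ : ℝ) : ℝ :=
  (mfun ρ θ u ζ * ((ζ - u) / θ)^2 - mfun ρ θ u ζ / θ) * ψ ζ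
    + 2 * (mfun ρ θ u ζ * (-(ζ - u) / θ)) * deriv ψ ζ
    + mfun ρ θ u ζ * deriv (deriv ψ) ζ

lemma hasDerivAt_q0 {ρ θ : ℝ} (u : ℝ) (hθ : θ ≠ 0) {ψ : ℝ → ℝ}
    (hψ : Differentiable ℝ ψ) (ζ : ℝ) :
    HasDerivAt (q0 ρ θ u ψ) (qd1 ρ θ u ψ ζ) ζ :=
  (hasDerivAt_mfun u hθ ζ).mul ((hψ ζ).hasDerivAt)

lemma hasDerivAt_qd1 {ρ θ : ℝ} (u : ℝ) (hθ : θ ≠ 0) {ψ : ℝ → ℝ}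
    (hψ : ContDiff ℝ (⊤ : ℕ∞) ψ) (ζ : ℝ) :
    HasDerivAt (qd1 ρ θ u ψ) (qd2 ρ θ u ψ ζ) ζ := by
  have hψ' : ContDiff ℝ (⊤:ℕ∞) ψ := hψ.of_le (by simp)
  have hψd : Differentiable ℝ ψ := hψ'.differentiable (by simp)
  have hψd2 : Differentiable ℝ (deriv ψ) :=
    (contDiff_infty_iff_deriv.mp hψ').2.differentiable (by simp)
  have hg : HasDerivAt (fun ζ : ℝ => -(ζ - u) / θ) (-1 / θ) ζ := by
    have := (((hasDerivAt_id ζ).sub_const u).neg).div_const θ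
    simpa using this
  have h1 := ((hasDerivAt_mfun (ρ:=ρ) u hθ ζ).mul hg).mul ((hψd ζ).hasDerivAt)
  have h2 := (hasDerivAt_mfun (ρ:=ρ) u hθ ζ).mul ((hψd2 ζ).hasDerivAt)
  have h3 := h1.add h2
  refine h3.congr_deriv ?_
  unfold qd2
  simp only [Pi.mul_apply]
  ring

lemma hasDerivAt_G {ρ θ : ℝ} (u : ℝ) (hθ : θ ≠ 0) {ψ : ℝ → ℝ}
    (hψ : Differentiable ℝ ψ) (φ s : ℝ) (h : 2 * φ < s^2) :
    HasDerivAt (fun t => q0 ρ θ u ψ (-Real.sqrt (t^2 - 2*φ)) - q0 ρ θ u ψ t)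
      (-(qd1 ρ θ u ψ (-Real.sqrt (s^2 - 2*φ))) * (s / Real.sqrt (s^2 - 2*φ))
        - qd1 ρ θ u ψ s) s := by
  have hpos : 0 < s^2 - 2*φ := by linarith
  have hw : 0 < Real.sqrt (s^2 - 2*φ) := Real.sqrt_pos.mpr hpos
  have h1 : HasDerivAt (fun t : ℝ => t^2 - 2*φ) (2*s) s := by
    simpa using ((hasDerivAt_pow 2 s).sub_const (2*φ))
  have h2 : HasDerivAt (fun t => Real.sqrt (t^2 - 2*φ)) (s / Real.sqrt (s^2 - 2*φ)) s := by
    have h3 := (Real.hasDerivAt_sqrt hpos.ne').comp s h1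
    refine h3.congr_deriv ?_
    field_simp
  have h4 := (hasDerivAt_q0 (ρ:=ρ) u hθ hψ (-Real.sqrt (s^2 - 2*φ))).comp s h2.neg
  have h5 := h4.sub (hasDerivAt_q0 (ρ:=ρ) u hθ hψ s)
  refine h5.congr_deriv ?_
  ring

lemma hasDerivAt_Gs {ρ θ : ℝ} (u : ℝ) (hθ : θ ≠ 0) {ψ : ℝ → ℝ}
    (hψ : ContDiff ℝ (⊤ : ℕ∞) ψ) (φ s : ℝ) (h : 2 * φ < s^2) :
    HasDerivAt (fun p => -(qd1 ρ θ u ψ (-Real.sqrt (s^2 - 2*p))) * (s / Real.sqrt (s^2 - 2*p))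
        - qd1 ρ θ u ψ s)
      (-(qd2 ρ θ u ψ (-Real.sqrt (s^2 - 2*φ))) * (s / (Real.sqrt (s^2 - 2*φ))^2)
        - qd1 ρ θ u ψ (-Real.sqrt (s^2 - 2*φ)) * (s / (Real.sqrt (s^2 - 2*φ))^3)) φ := by
  have hpos : 0 < s^2 - 2*φ := by linarith
  have hw : 0 < Real.sqrt (s^2 - 2*φ) := Real.sqrt_pos.mpr hpos
  have h1 : HasDerivAt (fun p : ℝ => s^2 - 2*p) (-2) φ := by
    simpa using ((hasDerivAt_id φ).const_mul 2).const_sub (s^2)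
  have h2 : HasDerivAt (fun p => Real.sqrt (s^2 - 2*p)) (-(1 / Real.sqrt (s^2 - 2*φ))) φ := by
    have h3 := (Real.hasDerivAt_sqrt hpos.ne').comp φ h1
    refine h3.congr_deriv ?_
    field_simp
  have h4 := (hasDerivAt_qd1 (ρ:=ρ) u hθ hψ (-Real.sqrt (s^2 - 2*φ))).comp φ h2.neg
  have h5 : HasDerivAt (fun p => s / Real.sqrt (s^2 - 2*p))
      (s / (Real.sqrt (s^2 - 2*φ))^3) φ := by
    have h6 := (hasDerivAt_const φ s).div h2 hw.ne'
    refine h6.congr_deriv ?_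
    ring
  have h7 := (h4.neg.mul h5).sub_const (qd1 ρ θ u ψ s)
  refine h7.congr_deriv ?_
  simp only [Function.comp_apply, Pi.neg_apply]
  ring


lemma deriv_zero_of_gt {ψ : ℝ → ℝ} {r : ℝ} (hψa : ∀ s, -r ≤ s → ψ s = 0)
    {s : ℝ} (hs : -r < s) : deriv ψ s = 0 := by
  have h : ψ =ᶠ[nhds s] (fun _ => (0:ℝ)) := by
    filter_upwards [Ioi_mem_nhds hs] with t ht
    exact hψa t (le_of_lt ht)
  rw [h.deriv_eq, deriv_const]

lemma deriv_zero_of_lt {ψ : ℝ → ℝ} {c : ℝ} (hψb : ∀ s, s ≤ c → ψ s = 1)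
    {s : ℝ} (hs : s < c) : deriv ψ s = 0 := by
  have h : ψ =ᶠ[nhds s] (fun _ => (1:ℝ)) := by
    filter_upwards [Iio_mem_nhds hs] with t ht
    exact hψb t (le_of_lt ht)
  rw [h.deriv_eq, deriv_const]

lemma deriv2_zero_of_gt {ψ : ℝ → ℝ} {r : ℝ} (hψa : ∀ s, -r ≤ s → ψ s = 0)
    {s : ℝ} (hs : -r < s) : deriv (deriv ψ) s = 0 := by
  have h : deriv ψ =ᶠ[nhds s] (fun _ => (0:ℝ)) := by
    filter_upwards [Ioi_mem_nhds hs] with t ht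
    exact deriv_zero_of_gt hψa ht
  rw [h.deriv_eq, deriv_const]

lemma deriv2_zero_of_lt {ψ : ℝ → ℝ} {c : ℝ} (hψb : ∀ s, s ≤ c → ψ s = 1)
    {s : ℝ} (hs : s < c) : deriv (deriv ψ) s = 0 := by
  have h : deriv ψ =ᶠ[nhds s] (fun _ => (0:ℝ)) := by
    filter_upwards [Iio_mem_nhds hs] with t ht
    exact deriv_zero_of_lt hψb ht
  rw [h.deriv_eq, deriv_const]

/-- bound for a continuous function vanishing off a compact interval -/

lemma bound_of_zero_off_Icc {f : ℝ → ℝ} {a b : ℝ} (hab : a ≤ b) (hf : Continuous f)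
    (h0 : ∀ s, s ∉ Icc a b → f s = 0) : ∃ C ≥ 0, ∀ s, |f s| ≤ C := by
  obtain ⟨s₀, _, hmax⟩ := isCompact_Icc.exists_isMaxOn (nonempty_Icc.mpr hab)
    (hf.abs.continuousOn (s := Icc a b))
  refine ⟨|f s₀|, abs_nonneg _, fun s => ?_⟩
  by_cases hs : s ∈ Icc a b
  · exact hmax hs
  · rw [h0 s hs]
    simp [abs_nonneg]


lemma integrable_pow_gauss_even {b : ℝ} (hb : 0 < b) (n : ℕ) :
    Integrable (fun x : ℝ => x ^ (2*n) * Real.exp (-b * x^2)) := by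
  apply Integrable.mono' (integrable_rpow_mul_exp_neg_mul_sq hb (s := ((2*n : ℕ):ℝ))
    (lt_of_lt_of_le neg_one_lt_zero (Nat.cast_nonneg _)))
  · exact (continuous_pow (2*n)).aestronglyMeasurable.mul
      (Real.continuous_exp.comp (by fun_prop)).aestronglyMeasurable
  · filter_upwards with x
    rw [Real.norm_eq_abs, abs_mul, abs_of_pos (Real.exp_pos _), Real.rpow_natCast, abs_pow,
      show |x| ^ (2*n) = x ^ (2*n) by rw [pow_mul, pow_mul, sq_abs]]

lemma integrable_pow_gauss {b : ℝ} (hb : 0 < b) (n : ℕ) :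
    Integrable (fun x : ℝ => x ^ n * Real.exp (-b * x^2)) := by
  apply Integrable.mono' ((integrable_exp_neg_mul_sq hb).add (integrable_pow_gauss_even hb n))
  · exact (continuous_pow n).aestronglyMeasurable.mul
      (Real.continuous_exp.comp (by fun_prop)).aestronglyMeasurable
  · filter_upwards with x
    rw [Real.norm_eq_abs, abs_mul, abs_of_pos (Real.exp_pos _), abs_pow]
    have hx : |x| ^ n ≤ 1 + x ^ (2*n) := by
      rcases le_or_gt (|x|) 1 with h | h
      · have h1 := pow_le_one₀ (abs_nonneg x) h (n := n)
        have h0 : 0 ≤ x^(2*n) := by rw [pow_mul]; positivity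
        linarith
      · have h2 : |x| ^ n ≤ |x| ^ (2*n) := pow_le_pow_right₀ h.le (by omega)
        have h3 : |x| ^ (2*n) = x ^ (2*n) := by rw [pow_mul, pow_mul, sq_abs]
        nlinarith
    simp only [Pi.add_apply]
    nlinarith [mul_le_mul_of_nonneg_right hx (Real.exp_pos (-b*x^2)).le]

lemma integrable_poly_gauss {θ : ℝ} (hθ : 0 < θ) (K u : ℝ) :
    Integrable (fun x : ℝ => K * (1 + x^2)^2 * Real.exp (-((x - u)^2 / (2*θ)))) := by
  have hb : 0 < 1/(2*θ) := by positivity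
  have h0 : Integrable (fun y : ℝ =>
      K * (1 + (y + u)^2)^2 * Real.exp (-(1/(2*θ)) * y^2)) := by
    have e : (fun y : ℝ => K * (1 + (y + u)^2)^2 * Real.exp (-(1/(2*θ)) * y^2))
        = fun y => (K*(1+u^2)^2) * (y^0 * Real.exp (-(1/(2*θ)) * y^2))
          + (4*K*(1+u^2)*u) * (y^1 * Real.exp (-(1/(2*θ)) * y^2))
          + (K*(4*u^2+2*(1+u^2))) * (y^2 * Real.exp (-(1/(2*θ)) * y^2))
          + (4*K*u) * (y^3 * Real.exp (-(1/(2*θ)) * y^2))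
          + K * (y^4 * Real.exp (-(1/(2*θ)) * y^2)) := by
      funext y; ring
    rw [e]
    exact (((((integrable_pow_gauss hb 0).const_mul _).add
      ((integrable_pow_gauss hb 1).const_mul _)).add
      ((integrable_pow_gauss hb 2).const_mul _)).add
      ((integrable_pow_gauss hb 3).const_mul _)).add
      ((integrable_pow_gauss hb 4).const_mul _)
  have h1 := h0.comp_sub_right u
  have e2 : (fun x : ℝ => K * (1 + x^2)^2 * Real.exp (-((x - u)^2 / (2*θ))))
      = fun x => K * (1 + ((x - u) + u)^2)^2 * Real.exp (-(1/(2*θ)) * (x - u)^2) := by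
    funext x
    rw [sub_add_cancel, show -(1/(2*θ)) * (x-u)^2 = -((x - u)^2 / (2*θ)) by ring]
  rw [e2]
  exact h1

lemma integrable_Efun {θ : ℝ} (hθ : 0 < θ) : Integrable (Efun θ) := by
  have hb : 0 < 1/(2*θ) := by positivity
  have e : Efun θ = fun p : ℝ × ℝ =>
      Real.exp (-(1/(2*θ)) * p.1^2) * Real.exp (-(1/(2*θ)) * p.2^2) := by
    funext p
    unfold Efun
    rw [← Real.exp_add]
    congr 1
    ring
  rw [e, MeasureTheory.Measure.volume_eq_prod ℝ ℝ]
  exact (integrable_exp_neg_mul_sq hb).mul_prod (integrable_exp_neg_mul_sq hb)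

lemma integrable_hfun {θ : ℝ} (hθ : 0 < θ) (K u : ℝ) :
    Integrable (fun ξ : ℝ × ℝ × ℝ =>
      (K * (1 + ξ.1^2) * Real.exp (-((ξ.1 - u)^2 / (4*θ))))^2 * Efun θ ξ.2) := by
  have e : (fun ξ : ℝ × ℝ × ℝ =>
      (K * (1 + ξ.1^2) * Real.exp (-((ξ.1 - u)^2 / (4*θ))))^2 * Efun θ ξ.2)
      = fun ξ => (K^2 * (1 + ξ.1^2)^2 * Real.exp (-((ξ.1 - u)^2 / (2*θ)))) * Efun θ ξ.2 := by
    funext ξ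
    rw [mul_pow, mul_pow, pow_two (Real.exp _), ← Real.exp_add,
      show -((ξ.1-u)^2/(4*θ)) + -((ξ.1-u)^2/(4*θ)) = -((ξ.1 - u)^2 / (2*θ)) by ring]
  rw [e, MeasureTheory.Measure.volume_eq_prod ℝ (ℝ×ℝ)]
  exact (integrable_poly_gauss hθ (K^2) u).mul_prod (integrable_Efun hθ)


lemma qd1_bound {ρ θ : ℝ} (hρ : 0 < ρ) (hθ : 0 < θ) (u : ℝ) {ψ : ℝ → ℝ}
    (hψ0 : ∀ s, 0 ≤ ψ s) (hψ1 : ∀ s, ψ s ≤ 1) {C₁ : ℝ}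
    (hC₁ : ∀ s, |deriv ψ s| ≤ C₁) (ζ : ℝ) :
    |qd1 ρ θ u ψ ζ| ≤ (1/θ + C₁) * (1 + (ζ-u)^2) * mfun ρ θ u ζ := by
  have hm := mfun_pos hρ hθ u ζ
  have hC₁0 : 0 ≤ C₁ := le_trans (abs_nonneg _) (hC₁ ζ)
  have hg : |(-(ζ-u)/θ)| = |ζ-u|/θ := by rw [abs_div, abs_neg, abs_of_pos hθ]
  have hψζ : |ψ ζ| ≤ 1 := abs_le.mpr ⟨by linarith [hψ0 ζ], hψ1 ζ⟩
  have habs : |ζ - u| ≤ 1 + (ζ-u)^2 := by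
    nlinarith [sq_nonneg (|ζ-u| - 1), sq_abs (ζ-u), abs_nonneg (ζ-u)]
  have h1 : |qd1 ρ θ u ψ ζ| ≤ mfun ρ θ u ζ * (|ζ-u|/θ) * 1 + mfun ρ θ u ζ * C₁ := by
    unfold qd1
    refine (abs_add_le _ _).trans ?_
    rw [abs_mul, abs_mul, abs_mul, abs_of_pos hm, hg]
    have h2 : mfun ρ θ u ζ * (|ζ-u|/θ) * |ψ ζ| ≤ mfun ρ θ u ζ * (|ζ-u|/θ) * 1 := by
      have : (0:ℝ) ≤ mfun ρ θ u ζ * (|ζ-u|/θ) := by positivity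
      exact mul_le_mul_of_nonneg_left hψζ this
    have h3 : mfun ρ θ u ζ * |deriv ψ ζ| ≤ mfun ρ θ u ζ * C₁ :=
      mul_le_mul_of_nonneg_left (hC₁ ζ) hm.le
    linarith
  have h3 : mfun ρ θ u ζ * (|ζ-u|/θ) ≤ mfun ρ θ u ζ * ((1 + (ζ-u)^2)/θ) := by gcongr
  have h4 : mfun ρ θ u ζ * C₁ ≤ (1 + (ζ-u)^2) * (mfun ρ θ u ζ * C₁) := by
    nlinarith [sq_nonneg (ζ-u), mul_nonneg hm.le hC₁0]
  have efin : mfun ρ θ u ζ * ((1 + (ζ-u)^2)/θ) + (1 + (ζ-u)^2) * (mfun ρ θ u ζ * C₁)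
      = (1/θ + C₁) * (1 + (ζ-u)^2) * mfun ρ θ u ζ := by ring
  linarith [h1, h3, h4]

lemma qd2_bound {ρ θ : ℝ} (hρ : 0 < ρ) (hθ : 0 < θ) (u : ℝ) {ψ : ℝ → ℝ}
    (hψ0 : ∀ s, 0 ≤ ψ s) (hψ1 : ∀ s, ψ s ≤ 1) {C₁ C₂ : ℝ}
    (hC₁ : ∀ s, |deriv ψ s| ≤ C₁) (hC₂ : ∀ s, |deriv (deriv ψ) s| ≤ C₂) (ζ : ℝ) :
    |qd2 ρ θ u ψ ζ| ≤ (1/θ^2 + 1/θ + 2*C₁/θ + C₂) * (1 + (ζ-u)^2) * mfun ρ θ u ζ := by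
  have hm := mfun_pos hρ hθ u ζ
  have hC₁0 : 0 ≤ C₁ := le_trans (abs_nonneg _) (hC₁ ζ)
  have hC₂0 : 0 ≤ C₂ := le_trans (abs_nonneg _) (hC₂ ζ)
  have hg : |(-(ζ-u)/θ)| = |ζ-u|/θ := by rw [abs_div, abs_neg, abs_of_pos hθ]
  have hψζ : |ψ ζ| ≤ 1 := abs_le.mpr ⟨by linarith [hψ0 ζ], hψ1 ζ⟩
  have habs : |ζ - u| ≤ 1 + (ζ-u)^2 := by
    nlinarith [sq_nonneg (|ζ-u| - 1), sq_abs (ζ-u), abs_nonneg (ζ-u)]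
  have hA : |(mfun ρ θ u ζ * ((ζ - u) / θ)^2 - mfun ρ θ u ζ / θ) * ψ ζ|
      ≤ mfun ρ θ u ζ * ((ζ - u) / θ)^2 + mfun ρ θ u ζ / θ := by
    rw [abs_mul]
    have hx : (0:ℝ) ≤ mfun ρ θ u ζ * ((ζ - u) / θ)^2 := mul_nonneg hm.le (sq_nonneg _)
    have hy : (0:ℝ) ≤ mfun ρ θ u ζ / θ := div_nonneg hm.le hθ.le
    have h1 : |mfun ρ θ u ζ * ((ζ - u) / θ)^2 - mfun ρ θ u ζ / θ|
        ≤ mfun ρ θ u ζ * ((ζ - u) / θ)^2 + mfun ρ θ u ζ / θ :=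
      abs_sub_le_iff.mpr ⟨by linarith, by linarith⟩
    calc |mfun ρ θ u ζ * ((ζ - u) / θ)^2 - mfun ρ θ u ζ / θ| * |ψ ζ|
        ≤ |mfun ρ θ u ζ * ((ζ - u) / θ)^2 - mfun ρ θ u ζ / θ| * 1 :=
          mul_le_mul_of_nonneg_left hψζ (abs_nonneg _)
      _ = |mfun ρ θ u ζ * ((ζ - u) / θ)^2 - mfun ρ θ u ζ / θ| := mul_one _
      _ ≤ _ := h1
  have hB : |2 * (mfun ρ θ u ζ * (-(ζ - u) / θ)) * deriv ψ ζ|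
      ≤ 2 * (mfun ρ θ u ζ * (|ζ-u| / θ)) * C₁ := by
    rw [abs_mul, abs_mul, abs_mul, hg]
    have h0 : (0:ℝ) ≤ |2| * (|mfun ρ θ u ζ| * (|ζ-u|/θ)) := by positivity
    calc |2| * (|mfun ρ θ u ζ| * (|ζ-u|/θ)) * |deriv ψ ζ|
        ≤ |2| * (|mfun ρ θ u ζ| * (|ζ-u|/θ)) * C₁ := mul_le_mul_of_nonneg_left (hC₁ ζ) h0
      _ = 2 * (mfun ρ θ u ζ * (|ζ-u| / θ)) * C₁ := by
          rw [abs_of_pos hm]; norm_num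
  have hC : |mfun ρ θ u ζ * deriv (deriv ψ) ζ| ≤ mfun ρ θ u ζ * C₂ := by
    rw [abs_mul, abs_of_pos hm]
    exact mul_le_mul_of_nonneg_left (hC₂ ζ) hm.le
  have h1 : |qd2 ρ θ u ψ ζ| ≤ mfun ρ θ u ζ * ((ζ - u) / θ)^2 + mfun ρ θ u ζ / θ
      + 2 * (mfun ρ θ u ζ * (|ζ-u| / θ)) * C₁ + mfun ρ θ u ζ * C₂ := by
    unfold qd2
    refine ((abs_add_le _ _).trans (add_le_add (abs_add_le _ _) le_rfl)).trans ?_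
    linarith
  have e2 : mfun ρ θ u ζ * ((ζ - u) / θ)^2 ≤ mfun ρ θ u ζ * ((1 + (ζ-u)^2)/θ^2) := by
    have hin : ((ζ - u) / θ)^2 ≤ (1 + (ζ-u)^2)/θ^2 := by
      rw [div_pow]
      gcongr
      linarith
    exact mul_le_mul_of_nonneg_left hin hm.le
  have e3 : mfun ρ θ u ζ / θ ≤ mfun ρ θ u ζ * ((1 + (ζ-u)^2)/θ) := by
    rw [div_eq_mul_one_div]
    have hin : 1/θ ≤ (1 + (ζ-u)^2)/θ := by
      gcongr
      nlinarith [sq_nonneg (ζ-u)]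
    exact mul_le_mul_of_nonneg_left hin hm.le
  have e4 : 2 * (mfun ρ θ u ζ * (|ζ-u| / θ)) * C₁
      ≤ 2 * (mfun ρ θ u ζ * ((1 + (ζ-u)^2) / θ)) * C₁ := by gcongr
  have e5 : mfun ρ θ u ζ * C₂ ≤ mfun ρ θ u ζ * C₂ * (1 + (ζ-u)^2) := by
    nlinarith [sq_nonneg (ζ-u), mul_nonneg hm.le hC₂0]
  have efin : mfun ρ θ u ζ * ((1 + (ζ-u)^2)/θ^2) + mfun ρ θ u ζ * ((1 + (ζ-u)^2)/θ)
      + 2 * (mfun ρ θ u ζ * ((1 + (ζ-u)^2) / θ)) * C₁ + mfun ρ θ u ζ * C₂ * (1 + (ζ-u)^2)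
      = (1/θ^2 + 1/θ + 2*C₁/θ + C₂) * (1 + (ζ-u)^2) * mfun ρ θ u ζ := by ring
  linarith [h1, e2, e3, e4, e5]

set_option maxHeartbeats 4000000 in
/-- `‖∂_x{∂_{ξ₁}(F^s − M∞ψ)/M∞^{1/2}}(x,·)‖_{L²_ξ} ≤ C |∂_xΦ^s(x)|`. -/
theorem stationary_difference_x_deriv_bound
    (ρ θ r σ u : ℝ) (hρ : 0 < ρ) (hθ : 0 < θ) (hr : 0 < r) (hσ : 0 < σ)
    (hu : u < 0) (hu2 : r + 2*σ < |u|)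
    (ψ : ℝ → ℝ) (hψ : ContDiff ℝ (⊤ : ℕ∞) ψ) (hψ0 : ∀ s, 0 ≤ ψ s) (hψ1 : ∀ s, ψ s ≤ 1)
    (hψa : ∀ s, -r ≤ s → ψ s = 0) (hψb : ∀ s, s ≤ -r - σ → ψ s = 1) :
    ∃ δ₀ > 0, ∃ C > 0, ∀ (Φb : ℝ) (Φs : ℝ → ℝ),
      0 < Φb → Φb ≤ δ₀ → ContDiff ℝ 1 Φs → (∀ x ≥ (0:ℝ), 0 ≤ Φs x ∧ Φs x ≤ Φb) →
      ∀ x ≥ (0:ℝ),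
        (∀ ξ : ℝ × ℝ × ℝ, DifferentiableAt ℝ
          (fun y => deriv (fun s => statF ρ θ u ψ Φs y (s, ξ.2) -
              Maxwellian ρ θ u (s, ξ.2) * ψ s) ξ.1 / Real.sqrt (Maxwellian ρ θ u ξ)) x) ∧
        Real.sqrt (∫ ξ : ℝ × ℝ × ℝ,
            (deriv (fun y => deriv (fun s => statF ρ θ u ψ Φs y (s, ξ.2) -
              Maxwellian ρ θ u (s, ξ.2) * ψ s) ξ.1 /
                Real.sqrt (Maxwellian ρ θ u ξ)) x)^2)
          ≤ C * |deriv Φs x| := by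
  have hθ0 : θ ≠ 0 := ne_of_gt hθ
  have hψ' : ContDiff ℝ (⊤:ℕ∞) ψ := hψ.of_le (by simp)
  have hψd : Differentiable ℝ ψ := hψ'.differentiable (by simp)
  have hcont1 : Continuous (deriv ψ) := hψ'.continuous_deriv (by exact_mod_cast le_top)
  have hcont2 : Continuous (deriv (deriv ψ)) :=
    ((contDiff_infty_iff_deriv.mp hψ').2).continuous_deriv (by exact_mod_cast le_top)
  have hIcc : -r - σ ≤ -r := by linarith
  obtain ⟨C₁, hC₁0, hC₁⟩ := bound_of_zero_off_Icc hIcc hcont1 (fun s hs => by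
    rw [Set.mem_Icc, not_and_or, not_le, not_le] at hs
    rcases hs with h | h
    · exact deriv_zero_of_lt hψb h
    · exact deriv_zero_of_gt hψa h)
  obtain ⟨C₂, hC₂0, hC₂⟩ := bound_of_zero_off_Icc hIcc hcont2 (fun s hs => by
    rw [Set.mem_Icc, not_and_or, not_le, not_le] at hs
    rcases hs with h | h
    · exact deriv2_zero_of_lt hψb h
    · exact deriv2_zero_of_gt hψa h)
  obtain ⟨a, ha_def⟩ : ∃ a : ℝ, a = ρ * (2 * π * θ) ^ (-(3:ℝ)/2) := ⟨_, rfl⟩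
  have ha : 0 < a := by rw [ha_def]; positivity
  obtain ⟨A₁, hA₁def⟩ : ∃ A : ℝ, A = 1/θ + C₁ := ⟨_, rfl⟩
  obtain ⟨A₂, hA₂def⟩ : ∃ A : ℝ, A = 1/θ^2 + 1/θ + 2*C₁/θ + C₂ := ⟨_, rfl⟩
  have hA₁0 : 0 ≤ A₁ := by rw [hA₁def]; have h1 : (0:ℝ) ≤ 1/θ := by positivity
                           linarith
  have hA₂0 : 0 ≤ A₂ := by
    rw [hA₂def]
    have h1 : (0:ℝ) ≤ 1/θ^2 := by positivity
    have h2 : (0:ℝ) ≤ 1/θ := by positivity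
    have h3 : (0:ℝ) ≤ 2*C₁/θ := by positivity
    linarith
  obtain ⟨K, hKdef⟩ : ∃ K : ℝ, K = (8/r * A₂ + 64/r^2 * A₁) * (3 + 2*u^2) * Real.sqrt a
      * Real.exp ((r^2/64)/θ) := ⟨_, rfl⟩
  obtain ⟨hfun, hhfdef⟩ : ∃ h : ℝ × ℝ × ℝ → ℝ, h = fun ξ =>
    (K * (1 + ξ.1^2) * Real.exp (-((ξ.1 - u)^2 / (4*θ))))^2 * Efun θ ξ.2 := ⟨_, rfl⟩
  have hIf : Integrable hfun := by rw [hhfdef]; exact integrable_hfun hθ K u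
  have hf0 : ∀ ξ, 0 ≤ hfun ξ := fun ξ => by
    rw [hhfdef]; exact mul_nonneg (sq_nonneg _) (Efun_pos θ ξ.2).le
  refine ⟨r^2/64, by positivity, Real.sqrt (∫ ξ, hfun ξ) + 1,
    by positivity, ?_⟩
  intro Φb Φs hΦb0 hΦbδ hΦs1 hΦsB x hx
  have hφ0 : 0 ≤ Φs x := (hΦsB x hx).1
  have hφδ : Φs x ≤ r^2/64 := le_trans (hΦsB x hx).2 hΦbδ
  have hΦsd : Differentiable ℝ Φs := hΦs1.differentiable one_ne_zero
  have hU : ∀ᶠ y in 𝓝 x, Φs y ∈ Ioo (-(r^2/64)) (r^2/32) := by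
    have hmem : Ioo (-(r^2/64)) (r^2/32) ∈ 𝓝 (Φs x) :=
      Ioo_mem_nhds (by nlinarith [mul_pos hr hr]) (by nlinarith [mul_pos hr hr])
    exact hΦs1.continuous.continuousAt.eventually_mem hmem
  obtain ⟨P, hPdef⟩ : ∃ P : ℝ × ℝ × ℝ → ℝ, P = fun ξ =>
    if ξ.1 < -(r/4) then
      Efun θ ξ.2 * (-(qd2 ρ θ u ψ (-Real.sqrt (ξ.1^2 - 2*Φs x)))
          * (ξ.1 / (Real.sqrt (ξ.1^2 - 2*Φs x))^2)
        - qd1 ρ θ u ψ (-Real.sqrt (ξ.1^2 - 2*Φs x))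
          * (ξ.1 / (Real.sqrt (ξ.1^2 - 2*Φs x))^3))
        / Real.sqrt (Maxwellian ρ θ u ξ)
    else 0 := ⟨_, rfl⟩
  have key : ∀ ξ : ℝ × ℝ × ℝ, HasDerivAt
      (fun y => deriv (fun s => statF ρ θ u ψ Φs y (s, ξ.2) -
        Maxwellian ρ θ u (s, ξ.2) * ψ s) ξ.1 / Real.sqrt (Maxwellian ρ θ u ξ))
      (deriv Φs x * P ξ) x := by
    intro ξ
    by_cases hξ : ξ.1 < -(r/4)
    · -- region B
      have hid : ∀ᶠ y in 𝓝 x,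
          deriv (fun s => statF ρ θ u ψ Φs y (s, ξ.2) -
            Maxwellian ρ θ u (s, ξ.2) * ψ s) ξ.1 / Real.sqrt (Maxwellian ρ θ u ξ)
          = Efun θ ξ.2 * (-(qd1 ρ θ u ψ (-Real.sqrt (ξ.1^2 - 2*Φs y)))
              * (ξ.1 / Real.sqrt (ξ.1^2 - 2*Φs y)) - qd1 ρ θ u ψ ξ.1)
            / Real.sqrt (Maxwellian ρ θ u ξ) := by
        filter_upwards [hU] with y hy
        congr 1
        have hloc : (fun s => statF ρ θ u ψ Φs y (s, ξ.2) -
            Maxwellian ρ θ u (s, ξ.2) * ψ s) =ᶠ[𝓝 ξ.1]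
            (fun s => Efun θ ξ.2 * (q0 ρ θ u ψ (-Real.sqrt (s^2 - 2*Φs y))
              - q0 ρ θ u ψ s)) := by
          filter_upwards [Iio_mem_nhds hξ] with s hs
          have hs0 : s < 0 := by simp only [mem_Iio] at hs; linarith
          have hcond : 2*Φs y < s^2 := by
            simp only [mem_Iio] at hs
            nlinarith [hy.2, hy.1]
          simp only [statF]
          rw [if_pos (show s < 0 ∧ 2*Φs y < s^2 from ⟨hs0, hcond⟩)]
          simp only [maxwellian_factor, q0]
          ring
        rw [hloc.deriv_eq]
        have hc2 : 2*Φs y < ξ.1^2 := by nlinarith [hy.2, hy.1]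
        exact ((hasDerivAt_G (ρ:=ρ) u hθ0 hψd (Φs y) ξ.1 hc2).const_mul
          (Efun θ ξ.2)).deriv
      have h2φ : 2*Φs x < ξ.1^2 := by nlinarith
      have hGs := (hasDerivAt_Gs (ρ:=ρ) u hθ0 hψ (Φs x) ξ.1 h2φ).comp x (hΦsd x).hasDerivAt
      have hDer := (hGs.const_mul (Efun θ ξ.2)).div_const (Real.sqrt (Maxwellian ρ θ u ξ))
      have hfin := hDer.congr_of_eventuallyEq hid
      refine hfin.congr_deriv ?_
      rw [hPdef]
      simp only [if_pos hξ]
      ring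
    · -- region A
      push_neg at hξ
      have hzero : ∀ᶠ y in 𝓝 x,
          deriv (fun s => statF ρ θ u ψ Φs y (s, ξ.2) -
            Maxwellian ρ θ u (s, ξ.2) * ψ s) ξ.1 / Real.sqrt (Maxwellian ρ θ u ξ)
          = 0 := by
        filter_upwards [hU] with y hy
        have hloc : (fun s => statF ρ θ u ψ Φs y (s, ξ.2) -
            Maxwellian ρ θ u (s, ξ.2) * ψ s) =ᶠ[𝓝 ξ.1] (fun _ => (0:ℝ)) := by
          filter_upwards [Ioi_mem_nhds (show -(r/2) < ξ.1 by linarith)] with s hs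
          simp only [mem_Ioi] at hs
          have hψs : ψ s = 0 := hψa s (by linarith)
          simp only [statF]
          split_ifs with hcond
          · have h1 : ψ (-Real.sqrt (s^2 - 2*Φs y)) = 0 := by
              apply hψa
              have hle : Real.sqrt (s^2 - 2*Φs y) ≤ r := by
                rw [show r = Real.sqrt (r^2) from (Real.sqrt_sq hr.le).symm]
                apply Real.sqrt_le_sqrt
                nlinarith [hy.1, hcond.1]
              linarith
            rw [hψs, h1, mul_zero, mul_zero, sub_zero]
          · rw [hψs, mul_zero, zero_sub, neg_zero]
        rw [hloc.deriv_eq, deriv_const]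
        exact zero_div _
      have hfin := (hasDerivAt_const x (0:ℝ)).congr_of_eventuallyEq hzero
      refine hfin.congr_deriv ?_
      rw [hPdef]
      simp only [if_neg (not_lt.mpr hξ)]
      ring
  constructor
  · exact fun ξ => (key ξ).differentiableAt
  · have hrw : (fun ξ : ℝ × ℝ × ℝ =>
        (deriv (fun y => deriv (fun s => statF ρ θ u ψ Φs y (s, ξ.2) -
          Maxwellian ρ θ u (s, ξ.2) * ψ s) ξ.1 /
            Real.sqrt (Maxwellian ρ θ u ξ)) x)^2)
        = fun ξ => (deriv Φs x * P ξ)^2 := by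
      funext ξ
      rw [(key ξ).deriv]
    rw [hrw]
    have hP2 : ∀ ξ : ℝ × ℝ × ℝ, (P ξ)^2 ≤ hfun ξ := by
      intro ξ
      rw [hPdef]
      simp only
      split_ifs with hξ
      · -- main pointwise estimate, region B
        have hξ1 : ξ.1 < 0 := by linarith
        have hsq : r^2/16 < ξ.1^2 := by nlinarith
        have hpos : 0 < ξ.1^2 - 2*Φs x := by nlinarith
        have hw : 0 < Real.sqrt (ξ.1^2 - 2*Φs x) := Real.sqrt_pos.mpr hpos
        have hw2 : (Real.sqrt (ξ.1^2 - 2*Φs x))^2 = ξ.1^2 - 2*Φs x := Real.sq_sqrt hpos.le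
        have hwle : Real.sqrt (ξ.1^2 - 2*Φs x) ≤ -ξ.1 := by
          have h1 : Real.sqrt (ξ.1^2 - 2*Φs x) ≤ Real.sqrt (ξ.1^2) :=
            Real.sqrt_le_sqrt (by linarith)
          rwa [Real.sqrt_sq_eq_abs, abs_of_neg hξ1] at h1
        have hwge : r/8 ≤ Real.sqrt (ξ.1^2 - 2*Φs x) := by
          have h1 : (r/8)^2 ≤ ξ.1^2 - 2*Φs x := by nlinarith
          calc r/8 = Real.sqrt ((r/8)^2) := (Real.sqrt_sq (by positivity)).symm
            _ ≤ _ := Real.sqrt_le_sqrt h1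
        set w := Real.sqrt (ξ.1^2 - 2*Φs x) with hwdef
        have hwsq : ξ.1^2/2 ≤ w^2 := by rw [hw2]; nlinarith
        have hc1 : |ξ.1 / w^2| ≤ 8/r := by
          rw [abs_div, abs_of_neg hξ1, abs_of_pos (pow_pos hw 2),
            div_le_div_iff₀ (pow_pos hw 2) hr]
          nlinarith [hwsq, mul_nonneg (show (0:ℝ) ≤ -ξ.1 - r/4 by linarith)
            (show (0:ℝ) ≤ -ξ.1 by linarith)]
        have hc2 : |ξ.1 / w^3| ≤ 64/r^2 := by
          rw [abs_div, abs_of_neg hξ1, abs_of_pos (pow_pos hw 3),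
            div_le_div_iff₀ (pow_pos hw 3) (by positivity : (0:ℝ) < r^2)]
          have h3 : ξ.1^2/2 * (r/8) ≤ w^3 := by
            have := mul_le_mul hwsq hwge (by positivity) (sq_nonneg w)
            nlinarith [this]
          nlinarith [h3, mul_nonneg (mul_nonneg
            (show (0:ℝ) ≤ -ξ.1 - r/4 by linarith)
            (show (0:ℝ) ≤ -ξ.1 by linarith)) hr.le]
        have hq1b := qd1_bound hρ hθ u hψ0 hψ1 hC₁ (-w)
        have hq2b := qd2_bound hρ hθ u hψ0 hψ1 hC₁ hC₂ (-w)
        rw [← hA₁def] at hq1b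
        rw [← hA₂def] at hq2b
        have hmw := (mfun_pos hρ hθ u (-w)).le
        have hwx : w^2 ≤ ξ.1^2 := by rw [hw2]; linarith
        have ht : 1 + (-w - u)^2 ≤ (3 + 2*u^2) * (1 + ξ.1^2) := by
          nlinarith [sq_nonneg (w - u), hwx, sq_nonneg ξ.1, sq_nonneg u,
            sq_nonneg (u*ξ.1)]
        have hkey : (ξ.1 - u)^2 ≤ (-w - u)^2 + 2*(r^2/64) := by
          nlinarith [hw2, hwle, hφ0, hφδ, mul_nonneg (neg_nonneg.mpr hu.le)
            (show (0:ℝ) ≤ -ξ.1 - w by linarith)]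
        have hexp : mfun ρ θ u (-w) ≤ Real.sqrt a * Real.exp ((r^2/64)/θ)
            * Real.exp (-((ξ.1 - u)^2/(4*θ))) * Real.sqrt (mfun ρ θ u ξ.1) := by
          rw [sqrt_mfun ρ θ u hρ hθ ξ.1, ← ha_def]
          calc mfun ρ θ u (-w) = a * Real.exp (-((-w - u)^2/(2*θ))) := by
                rw [ha_def]; unfold mfun; ring
            _ ≤ a * Real.exp ((r^2/64)/θ + (-((ξ.1 - u)^2/(4*θ))
                + -((ξ.1 - u)^2/(4*θ)))) := by
                apply mul_le_mul_of_nonneg_left _ ha.le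
                apply Real.exp_le_exp.mpr
                rw [show (r^2/64)/θ + (-((ξ.1 - u)^2/(4*θ)) + -((ξ.1 - u)^2/(4*θ)))
                    = (2*(r^2/64) - (ξ.1 - u)^2)/(2*θ) by field_simp; ring,
                  show -((-w - u)^2/(2*θ)) = (-(-w - u)^2)/(2*θ) by ring]
                gcongr
                linarith [hkey]
            _ = Real.sqrt a * Real.exp ((r^2/64)/θ)
                * Real.exp (-((ξ.1 - u)^2/(4*θ))) * (Real.sqrt a
                  * Real.exp (-((ξ.1 - u)^2/(4*θ)))) := by
                have hss : Real.sqrt a * Real.sqrt a = a := Real.mul_self_sqrt ha.le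
                rw [Real.exp_add, Real.exp_add]
                conv_lhs => rw [← hss]
                ring
        have hco : (0:ℝ) ≤ 8/r * A₂ + 64/r^2 * A₁ :=
          add_nonneg (mul_nonneg (by positivity) hA₂0)
            (mul_nonneg (by positivity) hA₁0)
        have hXabs : |(-(qd2 ρ θ u ψ (-w)) * (ξ.1/w^2)
              - qd1 ρ θ u ψ (-w) * (ξ.1/w^3))|
            ≤ |qd2 ρ θ u ψ (-w)| * |ξ.1/w^2| + |qd1 ρ θ u ψ (-w)| * |ξ.1/w^3| := by
          calc |(-(qd2 ρ θ u ψ (-w)) * (ξ.1/w^2) - qd1 ρ θ u ψ (-w) * (ξ.1/w^3))|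
              = |(-(qd2 ρ θ u ψ (-w)) * (ξ.1/w^2)) + (-(qd1 ρ θ u ψ (-w) * (ξ.1/w^3)))| := by
                rw [sub_eq_add_neg]
            _ ≤ |(-(qd2 ρ θ u ψ (-w)) * (ξ.1/w^2))| + |(-(qd1 ρ θ u ψ (-w) * (ξ.1/w^3)))| :=
                abs_add_le _ _
            _ = |qd2 ρ θ u ψ (-w)| * |ξ.1/w^2| + |qd1 ρ θ u ψ (-w)| * |ξ.1/w^3| := by
                simp only [abs_neg, abs_mul]
        have hX2 : |(-(qd2 ρ θ u ψ (-w)) * (ξ.1/w^2)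
              - qd1 ρ θ u ψ (-w) * (ξ.1/w^3))|
            ≤ (A₂ * (1 + (-w - u)^2) * mfun ρ θ u (-w)) * (8/r)
              + (A₁ * (1 + (-w - u)^2) * mfun ρ θ u (-w)) * (64/r^2) := by
          refine hXabs.trans ?_
          have g1 : |qd2 ρ θ u ψ (-w)| * |ξ.1/w^2|
              ≤ (A₂ * (1 + (-w - u)^2) * mfun ρ θ u (-w)) * (8/r) :=
            mul_le_mul hq2b hc1 (abs_nonneg _)
              (le_trans (abs_nonneg _) hq2b)
          have g2 : |qd1 ρ θ u ψ (-w)| * |ξ.1/w^3|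
              ≤ (A₁ * (1 + (-w - u)^2) * mfun ρ θ u (-w)) * (64/r^2) :=
            mul_le_mul hq1b hc2 (abs_nonneg _)
              (le_trans (abs_nonneg _) hq1b)
          linarith
        have hX4 : |(-(qd2 ρ θ u ψ (-w)) * (ξ.1/w^2)
              - qd1 ρ θ u ψ (-w) * (ξ.1/w^3))|
            ≤ K * (1 + ξ.1^2) * Real.exp (-((ξ.1 - u)^2/(4*θ)))
              * Real.sqrt (mfun ρ θ u ξ.1) := by
          have e1 : (A₂ * (1 + (-w - u)^2) * mfun ρ θ u (-w)) * (8/r)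
              + (A₁ * (1 + (-w - u)^2) * mfun ρ θ u (-w)) * (64/r^2)
              = (8/r * A₂ + 64/r^2 * A₁) * (1 + (-w - u)^2) * mfun ρ θ u (-w) := by
            ring
          have e2 : (8/r * A₂ + 64/r^2 * A₁) * (1 + (-w - u)^2) * mfun ρ θ u (-w)
              ≤ (8/r * A₂ + 64/r^2 * A₁) * ((3 + 2*u^2) * (1 + ξ.1^2))
                * mfun ρ θ u (-w) :=
            mul_le_mul_of_nonneg_right (mul_le_mul_of_nonneg_left ht hco) hmw
          have e3 : (8/r * A₂ + 64/r^2 * A₁) * ((3 + 2*u^2) * (1 + ξ.1^2))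
                * mfun ρ θ u (-w)
              ≤ (8/r * A₂ + 64/r^2 * A₁) * ((3 + 2*u^2) * (1 + ξ.1^2))
                * (Real.sqrt a * Real.exp ((r^2/64)/θ)
                  * Real.exp (-((ξ.1 - u)^2/(4*θ))) * Real.sqrt (mfun ρ θ u ξ.1)) :=
            mul_le_mul_of_nonneg_left hexp
              (mul_nonneg hco (by positivity))
          have e4 : (8/r * A₂ + 64/r^2 * A₁) * ((3 + 2*u^2) * (1 + ξ.1^2))
                * (Real.sqrt a * Real.exp ((r^2/64)/θ)
                  * Real.exp (-((ξ.1 - u)^2/(4*θ))) * Real.sqrt (mfun ρ θ u ξ.1))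
              = K * (1 + ξ.1^2) * Real.exp (-((ξ.1 - u)^2/(4*θ)))
                * Real.sqrt (mfun ρ θ u ξ.1) := by
            rw [hKdef]; ring
          linarith [hX2, e2, e3]
        have hmx := mfun_pos hρ hθ u ξ.1
        have hEx := Efun_pos θ ξ.2
        have hsm : 0 < Real.sqrt (mfun ρ θ u ξ.1) := Real.sqrt_pos.mpr hmx
        have hsE : 0 < Real.sqrt (Efun θ ξ.2) := Real.sqrt_pos.mpr hEx
        have hsM : Real.sqrt (Maxwellian ρ θ u ξ)
            = Real.sqrt (mfun ρ θ u ξ.1) * Real.sqrt (Efun θ ξ.2) := by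
          rw [maxwellian_factor, Real.sqrt_mul hmx.le]
        have hPeq : Efun θ ξ.2 * (-(qd2 ρ θ u ψ (-w)) * (ξ.1/w^2)
              - qd1 ρ θ u ψ (-w) * (ξ.1/w^3)) / Real.sqrt (Maxwellian ρ θ u ξ)
            = (-(qd2 ρ θ u ψ (-w)) * (ξ.1/w^2) - qd1 ρ θ u ψ (-w) * (ξ.1/w^3))
              * Real.sqrt (Efun θ ξ.2) / Real.sqrt (mfun ρ θ u ξ.1) := by
          rw [hsM, show Efun θ ξ.2 * (-(qd2 ρ θ u ψ (-w)) * (ξ.1/w^2)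
              - qd1 ρ θ u ψ (-w) * (ξ.1/w^3))
            = (-(qd2 ρ θ u ψ (-w)) * (ξ.1/w^2) - qd1 ρ θ u ψ (-w) * (ξ.1/w^3))
              * (Real.sqrt (Efun θ ξ.2) * Real.sqrt (Efun θ ξ.2)) by
              rw [Real.mul_self_sqrt hEx.le]; ring]
          rw [div_eq_div_iff (mul_pos hsm hsE).ne' hsm.ne']
          ring
        rw [hPeq, hhfdef]
        have hb1 : |(-(qd2 ρ θ u ψ (-w)) * (ξ.1/w^2) - qd1 ρ θ u ψ (-w) * (ξ.1/w^3))
              * Real.sqrt (Efun θ ξ.2) / Real.sqrt (mfun ρ θ u ξ.1)|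
            ≤ K * (1 + ξ.1^2) * Real.exp (-((ξ.1 - u)^2/(4*θ)))
              * Real.sqrt (Efun θ ξ.2) := by
          rw [abs_div, abs_mul, abs_of_pos hsE, abs_of_pos hsm, div_le_iff₀ hsm]
          calc |(-(qd2 ρ θ u ψ (-w)) * (ξ.1/w^2) - qd1 ρ θ u ψ (-w) * (ξ.1/w^3))|
                * Real.sqrt (Efun θ ξ.2)
              ≤ (K * (1 + ξ.1^2) * Real.exp (-((ξ.1 - u)^2/(4*θ)))
                * Real.sqrt (mfun ρ θ u ξ.1)) * Real.sqrt (Efun θ ξ.2) :=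
              mul_le_mul_of_nonneg_right hX4 hsE.le
            _ = K * (1 + ξ.1^2) * Real.exp (-((ξ.1 - u)^2/(4*θ)))
                * Real.sqrt (Efun θ ξ.2) * Real.sqrt (mfun ρ θ u ξ.1) := by ring
        calc ((-(qd2 ρ θ u ψ (-w)) * (ξ.1/w^2) - qd1 ρ θ u ψ (-w) * (ξ.1/w^3))
              * Real.sqrt (Efun θ ξ.2) / Real.sqrt (mfun ρ θ u ξ.1))^2
            = |(-(qd2 ρ θ u ψ (-w)) * (ξ.1/w^2) - qd1 ρ θ u ψ (-w) * (ξ.1/w^3))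
              * Real.sqrt (Efun θ ξ.2) / Real.sqrt (mfun ρ θ u ξ.1)|^2 :=
              (sq_abs _).symm
          _ ≤ (K * (1 + ξ.1^2) * Real.exp (-((ξ.1 - u)^2/(4*θ)))
              * Real.sqrt (Efun θ ξ.2))^2 := by
              apply pow_le_pow_left₀ (abs_nonneg _) hb1
          _ = (K * (1 + ξ.1^2) * Real.exp (-((ξ.1 - u)^2/(4*θ))))^2 * Efun θ ξ.2 := by
              rw [mul_pow (K * (1 + ξ.1^2) * Real.exp (-((ξ.1 - u)^2/(4*θ))))
                (Real.sqrt (Efun θ ξ.2)), Real.sq_sqrt hEx.le]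
      · simpa using hf0 ξ
    have hPh : ∀ ξ : ℝ × ℝ × ℝ, (deriv Φs x * P ξ)^2 ≤ (deriv Φs x)^2 * hfun ξ := by
      intro ξ
      rw [mul_pow]
      exact mul_le_mul_of_nonneg_left (hP2 ξ) (sq_nonneg _)
    have h1 : (∫ ξ : ℝ × ℝ × ℝ, (deriv Φs x * P ξ)^2)
        ≤ ∫ ξ : ℝ × ℝ × ℝ, (deriv Φs x)^2 * hfun ξ :=
      integral_mono_of_nonneg (Filter.Eventually.of_forall fun ξ => sq_nonneg _)
        (hIf.const_mul _) (Filter.Eventually.of_forall hPh)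
    have h2 : (∫ ξ : ℝ × ℝ × ℝ, (deriv Φs x)^2 * hfun ξ)
        = (deriv Φs x)^2 * ∫ ξ, hfun ξ := integral_const_mul _ _
    calc Real.sqrt (∫ ξ : ℝ × ℝ × ℝ, (deriv Φs x * P ξ)^2)
        ≤ Real.sqrt ((deriv Φs x)^2 * ∫ ξ, hfun ξ) :=
          Real.sqrt_le_sqrt (h1.trans_eq h2)
      _ = |deriv Φs x| * Real.sqrt (∫ ξ, hfun ξ) := by
          rw [Real.sqrt_mul (sq_nonneg _), Real.sqrt_sq_eq_abs]
      _ ≤ (Real.sqrt (∫ ξ, hfun ξ) + 1) * |deriv Φs x| := by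
          rw [mul_comm]
          have h3 : (0:ℝ) ≤ |deriv Φs x| := abs_nonneg _
          nlinarith [Real.sqrt_nonneg (∫ ξ, hfun ξ)]
end

section
/- Let n_e ∈ C²(ℝ) satisfy n_e(0) = 1, n_e'(0) = −1, and n_e'(Φ) < 0 for all Φ ∈ ℝ. Then there exist constants δ₀ > 0 and C > 0 such that the following holds. Let Φ_b > 0 and let Φ^s ∈ C¹([0,∞)) satisfy 0 ≤ Φ^s(x) ≤ Φ_b and |∂_xΦ^s(x)| ≤ Φ_b for all x ≥ 0; let n ∈ C¹([0,∞)) with n, n' ∈ L²(0,∞); and let φ ∈ C²([0,∞)) solve ∂_{xx}φ = n − (n_e(Φ^s + φ) − n_e(Φ^s)) on (0,∞) with φ(0) = 0, lim_{x→∞} φ(x) = 0 and φ, ∂_xφ ∈ L²(0,∞). If Φ_b + ( ∫₀^∞ (|n|² + |∂_x n|²) dx )^{1/2} ≤ δ₀, then ∂_{xx}φ is differentiable and ∫₀^∞ ( |φ|² + |∂_xφ|² + |∂_{xx}φ|² + |∂_{xxx}φ|² ) dx ≤ C ∫₀^∞ ( |n|² + |∂_x n|² ) dx. -/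
/-!
By the one-dimensional Sobolev inequality `n(x)² ≤ ‖n‖²_{H¹}`, smallness of `‖n‖_{H¹}` forces
`|n| < κ`, where `-κ < 0` bounds `n_e'` from above on `[-1, 2]`. Where `|φ| > 1` the nonlinearity
`n_e(Φ^s + φ) - n_e(Φ^s)` then dominates `n`, so the maximum principle gives `|φ| ≤ 1` and
`Φ^s + φ` stays in `[-1, 2]`. There `n_e` is uniformly decreasing and `n_e'`, `n_e''` are
bounded, so testing the equation against `φ` bounds `‖φ‖_{H¹}` by `‖n‖_{L²}`, and the equation
and its derivative bound `φ''` and `φ'''` pointwise by `φ, φ', n, n'`.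
-/

open MeasureTheory Real Set Filter

open Topology

lemma IsCompact.exists_pos_forall_le_neg {α : Type*} [TopologicalSpace α] {K : Set α}
    (hK : IsCompact K) {f : α → ℝ} (hf : ContinuousOn f K) (hneg : ∀ x ∈ K, f x < 0) :
    ∃ κ > 0, ∀ x ∈ K, f x ≤ -κ := by
  rcases K.eq_empty_or_nonempty with rfl | hK₀
  · exact ⟨1, one_pos, by simp⟩
  obtain ⟨x₀, hx₀, hmax⟩ := hK.exists_isMaxOn hK₀ hf
  exact ⟨-f x₀, neg_pos.2 (hneg x₀ hx₀), fun x hx => by simpa using hmax hx⟩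

lemma Convex.sub_mul_sub_le_of_deriv_le {D : Set ℝ} (hD : Convex ℝ D) {f : ℝ → ℝ}
    (hf : Differentiable ℝ f) {C : ℝ} (hf' : ∀ s ∈ D, deriv f s ≤ C) {x y : ℝ}
    (hx : x ∈ D) (hy : y ∈ D) : (f y - f x) * (y - x) ≤ C * (y - x) ^ 2 := by
  have key : ∀ u ∈ D, ∀ v ∈ D, u ≤ v → f v - f u ≤ C * (v - u) := fun u hu v hv huv =>
    hD.image_sub_le_mul_sub_of_deriv_le hf.continuous.continuousOn hf.differentiableOn
      (fun s hs => hf' s (interior_subset hs)) u hu v hv huv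
  rcases le_total x y with hxy | hyx
  · nlinarith [key x hx y hy hxy]
  · nlinarith [key y hy x hx hyx]

lemma IsLocalMax.deriv_deriv_nonpos {f : ℝ → ℝ} {x : ℝ} (h : IsLocalMax f x)
    (hc : ContinuousAt f x) : deriv (deriv f) x ≤ 0 := by
  by_contra! hpos
  have hmin : IsLocalMin f x := isLocalMin_of_deriv_deriv_pos hpos h.deriv_eq_zero hc
  have hconst : f =ᶠ[𝓝 x] fun _ => f x := by
    filter_upwards [h, hmin] with y hy hy' using le_antisymm hy hy'
  have hzero : deriv (deriv f) x = 0 := by simpa using hconst.deriv.deriv_eq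
  exact hpos.ne' hzero

lemma le_of_deriv_deriv_pos {φ : ℝ → ℝ} {a c : ℝ} (hc : 0 ≤ c) (hφ : Continuous φ)
    (ha : φ a ≤ c) (hlim : Tendsto φ atTop (𝓝 0))
    (hpos : ∀ x > a, c < φ x → 0 < deriv (deriv φ) x) : ∀ x ≥ a, φ x ≤ c := by
  by_contra! ⟨x₀, hx₀, hcx₀⟩
  obtain ⟨R, hRx₀, hR⟩ : ∃ R ≥ x₀, φ R < φ x₀ :=
    ((eventually_ge_atTop x₀).and (hlim.eventually (gt_mem_nhds (hc.trans_lt hcx₀)))).exists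
  obtain ⟨x₁, hx₁, hmax⟩ :=
    isCompact_Icc.exists_isMaxOn (nonempty_Icc.2 (hx₀.trans hRx₀)) hφ.continuousOn
  have hle : φ x₀ ≤ φ x₁ := hmax ⟨hx₀, hRx₀⟩
  have ha₁ : a < x₁ := lt_of_le_of_ne hx₁.1 (by rintro rfl; linarith)
  have hR₁ : x₁ < R := lt_of_le_of_ne hx₁.2 (by rintro rfl; linarith)
  have hloc : IsLocalMax φ x₁ := hmax.isLocalMax (Icc_mem_nhds ha₁ hR₁)
  linarith [hloc.deriv_deriv_nonpos hφ.continuousAt, hpos x₁ ha₁ (by linarith)]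

lemma abs_le_of_deriv_deriv_sign {φ : ℝ → ℝ} {a c : ℝ} (hc : 0 ≤ c) (hφ : Continuous φ)
    (ha : |φ a| ≤ c) (hlim : Tendsto φ atTop (𝓝 0))
    (hpos : ∀ x > a, c < φ x → 0 < deriv (deriv φ) x)
    (hneg : ∀ x > a, φ x < -c → deriv (deriv φ) x < 0) : ∀ x ≥ a, |φ x| ≤ c := by
  have hupper := le_of_deriv_deriv_pos hc hφ (abs_le.1 ha).2 hlim hpos
  have hlower := le_of_deriv_deriv_pos (φ := fun x => -φ x) hc hφ.neg
    (by linarith [(abs_le.1 ha).1]) (by simpa using hlim.neg) (fun x hx hcx => by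
      simpa using hneg x hx (by linarith))
  exact fun x hx => abs_le.2 ⟨by linarith [hlower x hx], hupper x hx⟩

lemma integral_Ioi_of_hasDerivAt_of_integrableOn {E : Type*} [NormedAddCommGroup E]
    [NormedSpace ℝ E] [CompleteSpace E] {f f' : ℝ → E} {a : ℝ}
    (hcont : ContinuousWithinAt f (Ici a) a) (hderiv : ∀ x ∈ Ioi a, HasDerivAt f (f' x) x)
    (hf : IntegrableOn f (Ioi a)) (hf' : IntegrableOn f' (Ioi a)) :
    ∫ x in Ioi a, f' x = -f a := by
  rw [integral_Ioi_of_hasDerivAt_of_tendsto hcont hderiv hf'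
    (tendsto_zero_of_hasDerivAt_of_integrableOn_Ioi hderiv hf' hf), zero_sub]

lemma Integrable.mul_of_integrable_sq {α : Type*} [MeasurableSpace α] {μ : Measure α}
    {f g : α → ℝ} (hf : AEStronglyMeasurable f μ) (hg : AEStronglyMeasurable g μ)
    (hf2 : Integrable (fun x => f x ^ 2) μ) (hg2 : Integrable (fun x => g x ^ 2) μ) :
    Integrable (fun x => f x * g x) μ :=
  ((memLp_two_iff_integrable_sq hf).2 hf2).integrable_mul ((memLp_two_iff_integrable_sq hg).2 hg2)

lemma sq_le_integral_Ioi_sq_add_deriv_sq {f : ℝ → ℝ} (hf : ContDiff ℝ 1 f) {a x : ℝ}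
    (hf2 : IntegrableOn (fun y => f y ^ 2) (Ioi a))
    (hdf2 : IntegrableOn (fun y => deriv f y ^ 2) (Ioi a)) (hx : a ≤ x) :
    f x ^ 2 ≤ ∫ y in Ioi a, (f y ^ 2 + deriv f y ^ 2) := by
  have hsub : Ioi x ⊆ Ioi a := Ioi_subset_Ioi hx
  have hsum : IntegrableOn (fun y => f y ^ 2 + deriv f y ^ 2) (Ioi a) := hf2.add hdf2
  have hdf : Continuous (deriv f) := hf.continuous_deriv le_rfl
  have hprod : IntegrableOn (fun y => 2 * (f y * deriv f y)) (Ioi x) :=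
    ((Integrable.mul_of_integrable_sq hf.continuous.aestronglyMeasurable
      hdf.aestronglyMeasurable (hf2.mono_set hsub) (hdf2.mono_set hsub))).const_mul 2
  have hFTC : ∫ y in Ioi x, 2 * (f y * deriv f y) = -f x ^ 2 :=
    integral_Ioi_of_hasDerivAt_of_integrableOn (f := fun y => f y ^ 2)
      (hf.continuous.pow 2).continuousWithinAt
      (fun y _ => ((hf.differentiable one_ne_zero y).hasDerivAt.fun_pow 2).congr_deriv
        (by norm_num; ring))
      (hf2.mono_set hsub) hprod
  calc f x ^ 2 = ∫ y in Ioi x, -(2 * (f y * deriv f y)) := by rw [integral_neg, hFTC, neg_neg]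
    _ ≤ ∫ y in Ioi x, (f y ^ 2 + deriv f y ^ 2) :=
        integral_mono hprod.neg (hsum.mono_set hsub)
          (fun y => by nlinarith [sq_nonneg (f y + deriv f y)])
    _ ≤ ∫ y in Ioi a, (f y ^ 2 + deriv f y ^ 2) :=
        setIntegral_mono_set hsum (Eventually.of_forall fun y => by positivity)
          hsub.eventuallyLE

lemma lintegral_ofReal_le_ofReal_integral {α : Type*} [MeasurableSpace α] {μ : Measure α}
    {s : Set α} (hs : MeasurableSet s) {f h : α → ℝ} (hh : IntegrableOn h s μ)
    (hh0 : ∀ x ∈ s, 0 ≤ h x) (hfh : ∀ x ∈ s, f x ≤ h x) :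
    ∫⁻ x in s, ENNReal.ofReal (f x) ∂μ ≤ ENNReal.ofReal (∫ x in s, h x ∂μ) := by
  rw [ofReal_integral_eq_lintegral_ofReal hh (ae_restrict_of_forall_mem hs hh0)]
  exact setLIntegral_mono_ae' hs
    (Eventually.of_forall fun x hx => ENNReal.ofReal_le_ofReal (hfh x hx))

lemma integral_sq_add_deriv_sq_le_of_coercive {φ n g : ℝ → ℝ} {a κ L : ℝ} (hκ : 0 < κ)
    (hφ : ContDiff ℝ 2 φ) (hφa : φ a = 0) (hn : Continuous n) (hg : Continuous g)
    (hφ2 : IntegrableOn (fun x => φ x ^ 2) (Ioi a))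
    (hdφ2 : IntegrableOn (fun x => deriv φ x ^ 2) (Ioi a))
    (hn2 : IntegrableOn (fun x => n x ^ 2) (Ioi a))
    (heq : ∀ x > a, deriv (deriv φ) x = n x - g x)
    (hcoer : ∀ x > a, g x * φ x ≤ -κ * φ x ^ 2) (hgL : ∀ x > a, |g x| ≤ L * |φ x|) :
    ∫ x in Ioi a, (φ x ^ 2 + deriv φ x ^ 2) ≤
      (1 / κ ^ 2 + 1 / (2 * κ)) * ∫ x in Ioi a, n x ^ 2 := by
  have hdφ : ContDiff ℝ 1 (deriv φ) := hφ.deriv' (n := 1)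
  have hnφ : IntegrableOn (fun x => n x * φ x) (Ioi a) :=
    Integrable.mul_of_integrable_sq hn.aestronglyMeasurable hφ.continuous.aestronglyMeasurable
      hn2 hφ2
  have hgφ : IntegrableOn (fun x => g x * φ x) (Ioi a) := by
    refine (hφ2.const_mul L).mono' (hg.mul hφ.continuous).aestronglyMeasurable
      (ae_restrict_of_forall_mem measurableSet_Ioi fun x hx => ?_)
    rw [norm_mul, Real.norm_eq_abs, Real.norm_eq_abs, ← sq_abs (φ x), sq, ← mul_assoc]
    exact mul_le_mul_of_nonneg_right (hgL x hx) (abs_nonneg _)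
  have hsub : IntegrableOn (fun x => n x * φ x - g x * φ x) (Ioi a) := hnφ.sub hgφ
  -- integrate `(φ φ')' = φ'² + φ φ''` over `(a, ∞)`, where `φ φ'` vanishes at both ends
  have hidentity : ∫ x in Ioi a, (deriv φ x ^ 2 + (n x * φ x - g x * φ x)) = 0 := by
    simpa [hφa] using integral_Ioi_of_hasDerivAt_of_integrableOn
      (f := fun x => φ x * deriv φ x) (f' := fun x => deriv φ x ^ 2 + (n x * φ x - g x * φ x))
      (hφ.continuous.mul hdφ.continuous).continuousWithinAt
      (fun x hx => ((hφ.differentiable two_ne_zero x).hasDerivAt.mul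
        (hdφ.differentiable one_ne_zero x).hasDerivAt).congr_deriv (by rw [heq x hx]; ring))
      (Integrable.mul_of_integrable_sq hφ.continuous.aestronglyMeasurable
        hdφ.continuous.aestronglyMeasurable hφ2 hdφ2) (hdφ2.add hsub)
  rw [integral_add hdφ2 hsub, integral_sub hnφ hgφ] at hidentity
  have hgφ_le : ∫ x in Ioi a, g x * φ x ≤ -κ * ∫ x in Ioi a, φ x ^ 2 := by
    rw [← integral_const_mul]
    exact setIntegral_mono_on hgφ (hφ2.const_mul _) measurableSet_Ioi hcoer
  have hnφ_le : -∫ x in Ioi a, n x * φ x ≤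
      ∫ x in Ioi a, (1 / (2 * κ) * n x ^ 2 + κ / 2 * φ x ^ 2) := by
    rw [← integral_neg]
    refine integral_mono hnφ.neg ((hn2.const_mul _).add (hφ2.const_mul _)) fun x => ?_
    have := sq_nonneg (n x + κ * φ x)
    field_simp
    nlinarith
  rw [integral_add (hn2.const_mul _) (hφ2.const_mul _), integral_const_mul,
    integral_const_mul] at hnφ_le
  rw [integral_add hφ2 hdφ2]
  set X := ∫ x in Ioi a, φ x ^ 2
  set Y := ∫ x in Ioi a, deriv φ x ^ 2
  set E := ∫ x in Ioi a, n x ^ 2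
  have hX : 0 ≤ X := setIntegral_nonneg measurableSet_Ioi fun x _ => sq_nonneg (φ x)
  have hY : 0 ≤ Y := setIntegral_nonneg measurableSet_Ioi fun x _ => sq_nonneg (deriv φ x)
  have hkey : Y + κ / 2 * X ≤ 1 / (2 * κ) * E := by linarith
  have hXle : X ≤ 1 / κ ^ 2 * E :=
    calc X = 2 / κ * (κ / 2 * X) := by field_simp
      _ ≤ 2 / κ * (1 / (2 * κ) * E) :=
          mul_le_mul_of_nonneg_left (by linarith) (by positivity)
      _ = 1 / κ ^ 2 * E := by field_simp
  linarith [mul_nonneg hκ.le hX]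

lemma sq_sub_add_sq_sub_le {a b u v p q L₁ L₂ : ℝ} (hu : |u| ≤ L₁ * |p|)
    (hv : |v| ≤ L₂ * |p| + L₁ * |q|) :
    (a - u) ^ 2 + (b - v) ^ 2 ≤ 3 * (L₁ ^ 2 + L₂ ^ 2) * (p ^ 2 + q ^ 2) + 3 * (a ^ 2 + b ^ 2) := by
  have hu2 : u ^ 2 ≤ L₁ ^ 2 * p ^ 2 := by
    rw [← sq_abs u, ← sq_abs p, ← mul_pow]
    exact pow_le_pow_left₀ (abs_nonneg u) hu 2
  have hbv : |b - v| ≤ |b| + L₂ * |p| + L₁ * |q| := by linarith [abs_sub b v]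
  have hbv2 : (b - v) ^ 2 ≤ (|b| + L₂ * |p| + L₁ * |q|) ^ 2 := by
    rw [← sq_abs (b - v)]
    exact pow_le_pow_left₀ (abs_nonneg _) hbv 2
  have hsum3 : (|b| + L₂ * |p| + L₁ * |q|) ^ 2 ≤ 3 * (b ^ 2 + L₂ ^ 2 * p ^ 2 + L₁ ^ 2 * q ^ 2) := by
    nlinarith [sq_abs b, sq_abs p, sq_abs q, sq_nonneg (|b| - L₂ * |p|),
      sq_nonneg (|b| - L₁ * |q|), sq_nonneg (L₂ * |p| - L₁ * |q|)]
  nlinarith [sq_nonneg (a + u), sq_nonneg (L₁ * q), sq_nonneg (L₂ * q), sq_nonneg (L₁ * p)]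

noncomputable def h3Constant (κ L₁ L₂ : ℝ) : ℝ :=
  (1 + 3 * (L₁ ^ 2 + L₂ ^ 2)) * (1 / κ ^ 2 + 1 / (2 * κ)) + 3

lemma h3Constant_pos {κ : ℝ} (hκ : 0 < κ) (L₁ L₂ : ℝ) : 0 < h3Constant κ L₁ L₂ := by
  unfold h3Constant; positivity

section HalfLinePoisson

variable {ne Φs n φ : ℝ → ℝ} {κ L L₁ L₂ : ℝ}

lemma add_mem_Icc_neg_one_two {s t : ℝ} (hs : s ∈ Icc (0 : ℝ) 1) (ht : t ∈ Icc (-1 : ℝ) 1) :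
    s + t ∈ Icc (-1 : ℝ) 2 :=
  ⟨by linarith [hs.1, ht.1], by linarith [hs.2, ht.2]⟩

lemma sub_mul_le_neg_mul_sq (hne : Differentiable ℝ ne)
    (hκ : ∀ s ∈ Icc (-1 : ℝ) 2, deriv ne s ≤ -κ) {s t : ℝ} (hs : s ∈ Icc (0 : ℝ) 1)
    (ht : t ∈ Icc (-1 : ℝ) 1) : (ne (s + t) - ne s) * t ≤ -κ * t ^ 2 := by
  have h := (convex_Icc (-1 : ℝ) 2).sub_mul_sub_le_of_deriv_le hne hκ
    (Icc_subset_Icc (by norm_num) (by norm_num) hs) (add_mem_Icc_neg_one_two hs ht)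
  rwa [add_sub_cancel_left] at h

lemma abs_sub_le_mul_abs (hne : Differentiable ℝ ne)
    (hL : ∀ s ∈ Icc (-1 : ℝ) 2, |deriv ne s| ≤ L) {s t : ℝ} (hs : s ∈ Icc (0 : ℝ) 1)
    (ht : t ∈ Icc (-1 : ℝ) 1) : |ne (s + t) - ne s| ≤ L * |t| := by
  have h := (convex_Icc (-1 : ℝ) 2).norm_image_sub_le_of_norm_deriv_le (fun x _ => hne x) hL
    (Icc_subset_Icc (by norm_num) (by norm_num) hs) (add_mem_Icc_neg_one_two hs ht)
  rwa [add_sub_cancel_left] at h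

lemma abs_le_one_of_poisson (hne : Differentiable ℝ ne) (hne' : ∀ s, deriv ne s < 0)
    (hκ : ∀ s ∈ Icc (-1 : ℝ) 2, deriv ne s ≤ -κ) (hΦs : ∀ x > 0, Φs x ∈ Icc (0 : ℝ) 1)
    (hn : ∀ x > 0, |n x| < κ) (hφ : Continuous φ)
    (heq : ∀ x > 0, deriv (deriv φ) x = n x - (ne (Φs x + φ x) - ne (Φs x)))
    (hφ0 : φ 0 = 0) (hlim : Tendsto φ atTop (𝓝 0)) : ∀ x ≥ 0, |φ x| ≤ 1 := by
  have hanti : Antitone ne := (strictAnti_of_deriv_neg hne').antitone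
  refine abs_le_of_deriv_deriv_sign zero_le_one hφ (by simp [hφ0]) hlim
    (fun x hx hφx => ?_) (fun x hx hφx => ?_) <;> rw [heq x hx]
  · have hstep := sub_mul_le_neg_mul_sq hne hκ (hΦs x hx) (t := 1) (by norm_num)
    have hmono := hanti (show Φs x + 1 ≤ Φs x + φ x by linarith)
    linarith [abs_lt.1 (hn x hx)]
  · have hstep := sub_mul_le_neg_mul_sq hne hκ (hΦs x hx) (t := -1) (by norm_num)
    have hmono := hanti (show Φs x + φ x ≤ Φs x + -1 by linarith)
    linarith [abs_lt.1 (hn x hx)]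

lemma hasDerivAt_deriv_deriv_of_poisson (hne : Differentiable ℝ ne)
    (hΦs : Differentiable ℝ Φs) (hn : Differentiable ℝ n) (hφ : Differentiable ℝ φ)
    (heq : ∀ x > 0, deriv (deriv φ) x = n x - (ne (Φs x + φ x) - ne (Φs x))) {x : ℝ}
    (hx : 0 < x) :
    HasDerivAt (deriv (deriv φ)) (deriv n x - ((deriv ne (Φs x + φ x) - deriv ne (Φs x)) *
      deriv Φs x + deriv ne (Φs x + φ x) * deriv φ x)) x := by
  have hrhs := (hn x).hasDerivAt.sub
    (((hne _).hasDerivAt.comp x ((hΦs x).hasDerivAt.add (hφ x).hasDerivAt)).sub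
      ((hne _).hasDerivAt.comp x (hΦs x).hasDerivAt))
  exact (hrhs.congr_deriv (by simp only [Pi.add_apply]; ring)).congr_of_eventuallyEq
    (eventually_of_mem (Ioi_mem_nhds hx) heq)

lemma sq_add_sq_iterate_deriv_le_of_poisson (hne : ContDiff ℝ 2 ne)
    (hL : ∀ s ∈ Icc (-1 : ℝ) 2, |deriv ne s| ≤ L₁ ∧ |deriv (deriv ne) s| ≤ L₂)
    (hΦs : ContDiff ℝ 1 Φs) (hn : ContDiff ℝ 1 n) (hφ : ContDiff ℝ 2 φ)
    (heq : ∀ x > 0, deriv (deriv φ) x = n x - (ne (Φs x + φ x) - ne (Φs x))) {x : ℝ}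
    (hx : 0 < x) (hΦsx : Φs x ∈ Icc (0 : ℝ) 1) (hdΦsx : |deriv Φs x| ≤ 1)
    (hφx : φ x ∈ Icc (-1 : ℝ) 1) :
    deriv^[2] φ x ^ 2 + deriv^[3] φ x ^ 2 ≤
      3 * (L₁ ^ 2 + L₂ ^ 2) * (φ x ^ 2 + deriv φ x ^ 2) + 3 * (n x ^ 2 + deriv n x ^ 2) := by
  have hne₁ : Differentiable ℝ ne := hne.differentiable two_ne_zero
  have hdiff₂ := abs_sub_le_mul_abs ((hne.deriv' (n := 1)).differentiable one_ne_zero)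
    (fun s hs => (hL s hs).2) hΦsx hφx
  have hdne := (hL _ (add_mem_Icc_neg_one_two hΦsx hφx)).1
  have hrhs' : |(deriv ne (Φs x + φ x) - deriv ne (Φs x)) * deriv Φs x +
      deriv ne (Φs x + φ x) * deriv φ x| ≤ L₂ * |φ x| + L₁ * |deriv φ x| := by
    grw [abs_add_le, abs_mul, abs_mul, hdiff₂, hdΦsx, hdne, mul_one]
    exact (abs_nonneg _).trans hdiff₂
  rw [show deriv^[2] φ x = _ from heq x hx, show deriv^[3] φ x = _ from
    (hasDerivAt_deriv_deriv_of_poisson hne₁ (hΦs.differentiable one_ne_zero)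
      (hn.differentiable one_ne_zero) (hφ.differentiable two_ne_zero) heq hx).deriv]
  exact sq_sub_add_sq_sub_le
    (abs_sub_le_mul_abs hne₁ (fun s hs => (hL s hs).1) hΦsx hφx) hrhs'

lemma H3_estimate_of_deriv_bounds (hne : ContDiff ℝ 2 ne) (hne' : ∀ s, deriv ne s < 0)
    (hκ : 0 < κ)
    (hbd : ∀ s ∈ Icc (-1 : ℝ) 2,
      deriv ne s ≤ -κ ∧ |deriv ne s| ≤ L₁ ∧ |deriv (deriv ne) s| ≤ L₂)
    (hΦs : ContDiff ℝ 1 Φs) (hΦsb : ∀ x > 0, Φs x ∈ Icc (0 : ℝ) 1 ∧ |deriv Φs x| ≤ 1)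
    (hn : ContDiff ℝ 1 n) (hn_small : ∀ x > 0, |n x| < κ)
    (hn2 : IntegrableOn (fun x => n x ^ 2) (Ioi 0))
    (hdn2 : IntegrableOn (fun x => deriv n x ^ 2) (Ioi 0)) (hφ : ContDiff ℝ 2 φ)
    (heq : ∀ x > 0, deriv (deriv φ) x = n x - (ne (Φs x + φ x) - ne (Φs x)))
    (hφ0 : φ 0 = 0) (hlim : Tendsto φ atTop (𝓝 0))
    (hφ2 : IntegrableOn (fun x => φ x ^ 2) (Ioi 0))
    (hdφ2 : IntegrableOn (fun x => deriv φ x ^ 2) (Ioi 0)) :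
    (∀ x > 0, DifferentiableAt ℝ (deriv (deriv φ)) x) ∧
      ∫⁻ x in Ioi 0, ENNReal.ofReal
          (φ x ^ 2 + deriv φ x ^ 2 + deriv^[2] φ x ^ 2 + deriv^[3] φ x ^ 2) ≤
        ENNReal.ofReal (h3Constant κ L₁ L₂ * ∫ x in Ioi 0, (n x ^ 2 + deriv n x ^ 2)) := by
  have hne₁ : Differentiable ℝ ne := hne.differentiable two_ne_zero
  have hφ₁ : ∀ x > 0, φ x ∈ Icc (-1 : ℝ) 1 := fun x hx => abs_le.1 <|
    abs_le_one_of_poisson hne₁ hne' (fun s hs => (hbd s hs).1) (fun x hx => (hΦsb x hx).1)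
      hn_small hφ.continuous heq hφ0 hlim x hx.le
  have hH1 := integral_sq_add_deriv_sq_le_of_coercive hκ hφ hφ0 hn.continuous
    (by fun_prop : Continuous fun x => ne (Φs x + φ x) - ne (Φs x)) hφ2 hdφ2 hn2 heq
    (fun x hx => sub_mul_le_neg_mul_sq hne₁ (fun s hs => (hbd s hs).1) (hΦsb x hx).1 (hφ₁ x hx))
    (fun x hx => abs_sub_le_mul_abs hne₁ (fun s hs => (hbd s hs).2.1) (hΦsb x hx).1 (hφ₁ x hx))
  refine ⟨fun x hx => (hasDerivAt_deriv_deriv_of_poisson hne₁ (hΦs.differentiable one_ne_zero)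
    (hn.differentiable one_ne_zero) (hφ.differentiable two_ne_zero) heq hx).differentiableAt, ?_⟩
  have hbound : ∀ x ∈ Ioi (0 : ℝ),
      φ x ^ 2 + deriv φ x ^ 2 + deriv^[2] φ x ^ 2 + deriv^[3] φ x ^ 2 ≤
        (1 + 3 * (L₁ ^ 2 + L₂ ^ 2)) * (φ x ^ 2 + deriv φ x ^ 2) +
          3 * (n x ^ 2 + deriv n x ^ 2) := fun x hx => by
    linarith [sq_add_sq_iterate_deriv_le_of_poisson hne (fun s hs => (hbd s hs).2) hΦs hn hφ
      heq hx (hΦsb x hx).1 (hΦsb x hx).2 (hφ₁ x hx)]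
  have hφ12 : IntegrableOn (fun x => φ x ^ 2 + deriv φ x ^ 2) (Ioi 0) := hφ2.add hdφ2
  have hn12 : IntegrableOn (fun x => n x ^ 2 + deriv n x ^ 2) (Ioi 0) := hn2.add hdn2
  have hdom : IntegrableOn (fun x => (1 + 3 * (L₁ ^ 2 + L₂ ^ 2)) * (φ x ^ 2 + deriv φ x ^ 2) +
      3 * (n x ^ 2 + deriv n x ^ 2)) (Ioi 0) := (hφ12.const_mul _).add (hn12.const_mul _)
  refine (lintegral_ofReal_le_ofReal_integral measurableSet_Ioi hdom
    (fun x _ => by positivity) hbound).trans (ENNReal.ofReal_le_ofReal ?_)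
  have hn_le : ∫ x in Ioi 0, n x ^ 2 ≤ ∫ x in Ioi 0, (n x ^ 2 + deriv n x ^ 2) :=
    integral_mono hn2 hn12 fun x => le_add_of_nonneg_right (sq_nonneg _)
  rw [integral_add (hφ12.const_mul _) (hn12.const_mul _), integral_const_mul,
    integral_const_mul, h3Constant, add_mul]
  have := mul_le_mul_of_nonneg_left (hH1.trans (mul_le_mul_of_nonneg_left hn_le (by positivity)))
    (by positivity : (0 : ℝ) ≤ 1 + 3 * (L₁ ^ 2 + L₂ ^ 2))
  linarith

end HalfLinePoisson

theorem elliptic_H3_estimate_general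
    (ne : ℝ → ℝ) (hne : ContDiff ℝ 2 ne)
    (hne' : ∀ s, deriv ne s < 0) :
    ∃ δ₀ > 0, ∃ C > 0, ∀ (Φb : ℝ) (Φs n φ : ℝ → ℝ),
      0 < Φb → ContDiff ℝ 1 Φs →
      (∀ x ≥ (0:ℝ), 0 ≤ Φs x ∧ Φs x ≤ Φb ∧ |deriv Φs x| ≤ Φb) →
      ContDiff ℝ 1 n →
      Integrable (fun x => (n x)^2) (volume.restrict (Set.Ioi 0)) →
      Integrable (fun x => (deriv n x)^2) (volume.restrict (Set.Ioi 0)) →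
      ContDiff ℝ 2 φ →
      (∀ x > (0:ℝ), deriv (deriv φ) x = n x - (ne (Φs x + φ x) - ne (Φs x))) →
      φ 0 = 0 → Tendsto φ atTop (nhds 0) →
      Integrable (fun x => (φ x)^2) (volume.restrict (Set.Ioi 0)) →
      Integrable (fun x => (deriv φ x)^2) (volume.restrict (Set.Ioi 0)) →
      Φb + Real.sqrt (∫ x in Set.Ioi (0:ℝ), ((n x)^2 + (deriv n x)^2)) ≤ δ₀ →
      (∀ x > (0:ℝ), DifferentiableAt ℝ (deriv (deriv φ)) x) ∧
      (∫⁻ x in Set.Ioi (0:ℝ), ENNReal.ofReal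
          ((φ x)^2 + (deriv φ x)^2 + (deriv^[2] φ x)^2 + (deriv^[3] φ x)^2))
        ≤ ENNReal.ofReal (C * ∫ x in Set.Ioi (0:ℝ), ((n x)^2 + (deriv n x)^2)) := by
  obtain ⟨κ, hκ, hκbd⟩ := isCompact_Icc.exists_pos_forall_le_neg
    (hne.continuous_deriv one_le_two).continuousOn fun s (_ : s ∈ Icc (-1 : ℝ) 2) => hne' s
  obtain ⟨L₁, hL₁⟩ := isCompact_Icc.exists_bound_of_continuousOn
    (hne.continuous_deriv one_le_two).continuousOn (s := Icc (-1 : ℝ) 2)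
  obtain ⟨L₂, hL₂⟩ := isCompact_Icc.exists_bound_of_continuousOn
    ((hne.deriv' (n := 1)).continuous_deriv le_rfl).continuousOn (s := Icc (-1 : ℝ) 2)
  refine ⟨min 1 (κ / 2), by positivity, h3Constant κ L₁ L₂, h3Constant_pos hκ L₁ L₂, ?_⟩
  intro Φb Φs n φ _ hΦs hΦsb hn hn2 hdn2 hφ heq hφ0 hlim hφ2 hdφ2 hsmall
  have hsqrt := Real.sqrt_nonneg (∫ x in Ioi (0 : ℝ), (n x ^ 2 + deriv n x ^ 2))
  have hΦb : Φb ≤ 1 := by linarith [min_le_left 1 (κ / 2)]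
  have hn_small : ∀ x > 0, |n x| < κ := fun x hx => by
    rw [← Real.sqrt_sq_eq_abs]
    calc √(n x ^ 2) ≤ √(∫ x in Ioi (0 : ℝ), (n x ^ 2 + deriv n x ^ 2)) :=
          Real.sqrt_le_sqrt (sq_le_integral_Ioi_sq_add_deriv_sq hn hn2 hdn2 hx.le)
      _ < κ := by linarith [(hΦsb x hx.le).1, (hΦsb x hx.le).2.1, min_le_right 1 (κ / 2)]
  exact H3_estimate_of_deriv_bounds hne hne' hκ
    (fun s hs => ⟨hκbd s hs, hL₁ s hs, hL₂ s hs⟩) hΦs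
    (fun x hx => ⟨⟨(hΦsb x hx.le).1, by linarith [(hΦsb x hx.le).2.1]⟩,
      by linarith [(hΦsb x hx.le).2.2]⟩) hn hn_small hn2 hdn2 hφ heq hφ0 hlim hφ2 hdφ2

/-- unweighted `H³` elliptic estimate `‖φ‖_{H³} ≤ C ‖n‖_{H¹}` for the
perturbed Poisson equation `∂_{xx}φ = n − (n_e(Φ^s + φ) − n_e(Φ^s))` on the half-line. -/
theorem elliptic_H3_estimate
    (ne : ℝ → ℝ) (hne : ContDiff ℝ 2 ne) (hne0 : ne 0 = 1)
    (hne1 : deriv ne 0 = -1) (hne' : ∀ s, deriv ne s < 0) :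
    ∃ δ₀ > 0, ∃ C > 0, ∀ (Φb : ℝ) (Φs n φ : ℝ → ℝ),
      0 < Φb → ContDiff ℝ 1 Φs →
      (∀ x ≥ (0:ℝ), 0 ≤ Φs x ∧ Φs x ≤ Φb ∧ |deriv Φs x| ≤ Φb) →
      ContDiff ℝ 1 n →
      Integrable (fun x => (n x)^2) (volume.restrict (Set.Ioi 0)) →
      Integrable (fun x => (deriv n x)^2) (volume.restrict (Set.Ioi 0)) →
      ContDiff ℝ 2 φ →
      (∀ x > (0:ℝ), deriv (deriv φ) x = n x - (ne (Φs x + φ x) - ne (Φs x))) →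
      φ 0 = 0 → Tendsto φ atTop (nhds 0) →
      Integrable (fun x => (φ x)^2) (volume.restrict (Set.Ioi 0)) →
      Integrable (fun x => (deriv φ x)^2) (volume.restrict (Set.Ioi 0)) →
      Φb + Real.sqrt (∫ x in Set.Ioi (0:ℝ), ((n x)^2 + (deriv n x)^2)) ≤ δ₀ →
      (∀ x > (0:ℝ), DifferentiableAt ℝ (deriv (deriv φ)) x) ∧
      (∫⁻ x in Set.Ioi (0:ℝ), ENNReal.ofReal
          ((φ x)^2 + (deriv φ x)^2 + (deriv^[2] φ x)^2 + (deriv^[3] φ x)^2))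
        ≤ ENNReal.ofReal (C * ∫ x in Set.Ioi (0:ℝ), ((n x)^2 + (deriv n x)^2)) :=
  elliptic_H3_estimate_general ne hne hne'
end
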